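/- arXiv:1307.3437 — 3 statements merged into one kernel-verified Lean document; each statement's English description precedes it below -/
import Mathlib

section
/- Let $\Delta^n \subset \mathbb{R}^{n+1}$ be the standard $n$-simplex and let $X_1, \ldots, X_{n+1}$ be closed subsets covering $\Delta^n$ such that for each $i$, the set $X_i$ is disjoint from the $i$-th facet $\{x \in \Delta^n : x_i = 0\}$. Then $\bigcap_{i=1}^{n+1} X_i \neq \emptyset$. -/
/-!
Sperner's lemma. The dilated simplex `k • Δⁿ` is cut by the Kuhn triangulation, whose cells are
the lattice paths from a grid point that move one unit from coordinate `i` to `i + 1` once for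
each `i < n`. Colouring a grid point `v` by some `i` with `v / k ∈ X i` is a Sperner colouring,
since `X i` misses the facet `x i = 0`; so some cell is rainbow, by the parity count: a rainbow
facet of a cell lies in exactly two cells, unless it lies on the face `x n = 0`, where the
rainbow facets are the rainbow cells one dimension lower. The vertices of a rainbow cell lie in
`X 0, …, X n` respectively and within `1 / k` of each other, so as `k → ∞` a limit point, which
exists by compactness, lies in every closed set `X i`.
-/

open Finset

lemma card_filter_eq_le_one {α β : Type*} [DecidableEq β] {s : Finset α} {g : α → β}
    (hg : Set.InjOn g s) (b : β) : #{a ∈ s | g a = b} ≤ 1 :=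
  card_le_one.mpr fun _ hx _ hy => hg (mem_filter.mp hx).1 (mem_filter.mp hy).1
    ((mem_filter.mp hx).2.trans (mem_filter.mp hy).2.symm)

lemma bijOn_Iio_of_injOn {d : ℕ} {τ : ℕ → ℕ} (hτ : ∀ p < d, τ p < d)
    (hinj : Set.InjOn τ (Set.Iio d)) : Set.BijOn τ (Set.Iio d) (Set.Iio d) :=
  ((Set.finite_Iio d).injOn_iff_bijOn_of_mapsTo fun p hp => hτ p hp).mp hinj

lemma apply_eq_of_bijOn_of_forall_ne {α β : Type*} {s : Set α} {t : Set β} {σ τ : α → β}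
    (hσ : Set.BijOn σ s t) (hτ : Set.BijOn τ s t) {q : α} (hq : q ∈ s)
    (h : ∀ p ∈ s, p ≠ q → σ p = τ p) : σ q = τ q := by
  obtain ⟨p, hp, hpq⟩ := hτ.surjOn (hσ.mapsTo hq)
  by_cases hne : p = q
  · rw [← hpq, hne]
  · exact absurd (hσ.injOn hp hq ((h p hp hne).trans hpq)) hne

theorem nonempty_iInter_of_forall_dist_le {α ι : Type*} [PseudoMetricSpace α] {X : ι → Set α}
    {K : Set α} (hK : IsCompact K) (hclosed : ∀ i, IsClosed (X i)) {i₀ : ι} (hX : X i₀ ⊆ K)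
    (h : ∀ ε > 0, ∃ y : ι → α, (∀ i, y i ∈ X i) ∧ ∀ i, dist (y i) (y i₀) ≤ ε) :
    (⋂ i, X i).Nonempty := by
  choose y hyX hyd using fun n : ℕ => h (1 / (n + 1)) (by positivity)
  obtain ⟨a, -, φ, hφ, hlim⟩ := hK.tendsto_subseq fun n => hX (hyX n i₀)
  refine ⟨a, Set.mem_iInter.mpr fun i => (hclosed i).mem_of_tendsto (f := fun n => y (φ n) i)
    (b := Filter.atTop) ?_ (Filter.Eventually.of_forall fun n => hyX (φ n) i)⟩
  have hε := (tendsto_one_div_add_atTop_nhds_zero_nat (𝕜 := ℝ)).comp hφ.tendsto_atTop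
  rw [tendsto_iff_dist_tendsto_zero] at hlim ⊢
  refine squeeze_zero (fun _ => dist_nonneg)
    (fun n => (dist_triangle _ (y (φ n) i₀) a).trans (add_le_add_left (hyd _ i) _)) ?_
  simpa using hε.add hlim

section Doors

variable {α : Type*} [DecidableEq α] {s : Finset α} {col : α → ℕ} {d : ℕ}

lemma card_filter_image_erase_eq_one (hs : #s = d + 1) (hcol : s.image col = range (d + 1)) :
    #{j ∈ s | (s.erase j).image col = range d} = 1 := by
  have hinj : Set.InjOn col s := injOn_of_card_image_eq (by rw [hcol, hs, card_range])
  obtain ⟨j₀, hj₀, hd⟩ := mem_image.mp (hcol ▸ self_mem_range_succ d : d ∈ s.image col)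
  refine card_eq_one.mpr ⟨j₀, eq_singleton_iff_unique_mem.mpr ⟨mem_filter.mpr ⟨hj₀, ?_⟩, ?_⟩⟩
  · refine eq_of_subset_of_card_le (fun x hx => ?_) ?_
    · obtain ⟨j, hj, rfl⟩ := mem_image.mp hx
      have hj' := mem_image_of_mem col (mem_of_mem_erase hj)
      rw [hcol, mem_range] at hj'
      have : col j ≠ d := fun h =>
        ne_of_mem_erase hj (hinj (mem_of_mem_erase hj) hj₀ (h.trans hd.symm))
      rw [mem_range]; omega
    · rw [card_image_of_injOn (hinj.mono (erase_subset _ _)), card_erase_of_mem hj₀, hs,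
        card_range, Nat.add_sub_cancel]
  · intro j hj
    by_contra hne
    have := mem_image_of_mem col (mem_erase.mpr ⟨Ne.symm hne, hj₀⟩)
    rw [(mem_filter.mp hj).2, hd] at this
    simp at this

lemma even_card_filter_image_erase_eq (hs : #s = d + 1) (hcol : ∀ j ∈ s, col j ≤ d)
    (hne : s.image col ≠ range (d + 1)) : Even #{j ∈ s | (s.erase j).image col = range d} := by
  set D := {j ∈ s | (s.erase j).image col = range d}
  obtain hD | ⟨j₀, hj₀⟩ := D.eq_empty_or_nonempty
  · simp [hD]
  obtain ⟨hj₀s, hdoor₀⟩ := mem_filter.mp hj₀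
  have himage (j) (hj : j ∈ s) : s.image col = insert (col j) ((s.erase j).image col) := by
    rw [← image_insert, insert_erase hj]
  have hlt : col j₀ < d := by
    have := hcol j₀ hj₀s
    refine lt_of_le_of_ne this fun h => hne ?_
    rw [himage j₀ hj₀s, hdoor₀, h, range_add_one]
  obtain ⟨j₁, hj₁, hcol₁⟩ := mem_image.mp (hdoor₀ ▸ mem_range.mpr hlt : col j₀ ∈ _)
  have hs_image : s.image col = range d := by
    rw [himage j₀ hj₀s, hdoor₀, insert_eq_of_mem (mem_range.mpr hlt)]
  have hinj (j) (hj : j ∈ D) : Set.InjOn col (s.erase j) := by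
    obtain ⟨hjs, hdoor⟩ := mem_filter.mp hj
    refine injOn_of_card_image_eq ?_
    rw [hdoor, card_erase_of_mem hjs, hs, card_range, Nat.add_sub_cancel]
  have hj₁D : j₁ ∈ D := by
    refine mem_filter.mpr ⟨mem_of_mem_erase hj₁, le_antisymm ?_ ?_⟩
    · exact hs_image ▸ image_subset_image (erase_subset _ _)
    · rw [← hdoor₀]
      intro x hx
      obtain ⟨i, hi, rfl⟩ := mem_image.mp hx
      by_cases hij : i = j₁
      · exact mem_image.mpr
          ⟨j₀, mem_erase.mpr ⟨Ne.symm (ne_of_mem_erase hj₁), hj₀s⟩, hij ▸ hcol₁.symm⟩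
      · exact mem_image_of_mem col (mem_erase.mpr ⟨hij, mem_of_mem_erase hi⟩)
  have hD : D = {j₀, j₁} := by
    refine eq_of_subset_of_card_le (fun j hj => ?_) ?_
    · by_contra hj'
      simp only [mem_insert, mem_singleton, not_or] at hj'
      exact ne_of_mem_erase hj₁ (hinj j hj (mem_erase.mpr ⟨Ne.symm hj'.2, mem_of_mem_erase hj₁⟩)
        (mem_erase.mpr ⟨Ne.symm hj'.1, hj₀s⟩) hcol₁)
    · exact card_le_card (insert_subset hj₀ (singleton_subset_iff.mpr hj₁D))
  rw [hD, card_pair (Ne.symm (ne_of_mem_erase hj₁))]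
  exact even_two

end Doors

namespace Sperner

/-- Grid points of every dimension live in `ℤ^ℕ`, so that the facets of a cell of dimension
`n + 1` are paths of the same type as cells of dimension `n`. -/
abbrev Pt : Type := ℕ → ℤ

def step (i : ℕ) : Pt := fun x => if x = i + 1 then 1 else if x = i then -1 else 0

@[simp] lemma step_self (i : ℕ) : step i i = -1 := by simp [step]

@[simp] lemma step_succ_self (i : ℕ) : step i (i + 1) = 1 := by simp [step]

lemma step_of_ne {i x : ℕ} (h₁ : x ≠ i) (h₂ : x ≠ i + 1) : step i x = 0 := by
  simp [step, h₁, h₂]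

lemma step_nonneg {i x : ℕ} (h : x ≠ i) : 0 ≤ step i x := by
  simp only [step]; split_ifs <;> omega

lemma step_nonpos {i x : ℕ} (h : x ≠ i + 1) : step i x ≤ 0 := by
  simp only [step]; split_ifs <;> omega

lemma step_injective : Function.Injective step := by
  intro a b h
  have := congrFun h a
  simp only [step] at this
  split_ifs at this <;> omega

lemma sum_mul_step (g : ℕ → ℤ) {i N : ℕ} (h : i + 2 ≤ N) :
    ∑ x ∈ range N, g x * step i x = g (i + 1) - g i := by
  have hsub : ({i, i + 1} : Finset ℕ) ⊆ range N := by
    intro x hx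
    simp only [mem_insert, mem_singleton] at hx
    rcases hx with rfl | rfl <;> (rw [mem_range]; omega)
  rw [← sum_subset hsub, sum_pair (by omega : i ≠ i + 1), step_self, step_succ_self]
  · ring
  · intro x _ hx
    simp only [mem_insert, mem_singleton, not_or] at hx
    rw [step_of_ne hx.1 hx.2, mul_zero]

lemma sum_step {i N : ℕ} (h : i + 2 ≤ N) : ∑ x ∈ range N, step i x = 0 := by
  simpa using sum_mul_step (fun _ => 1) h

/-- The moments `v ↦ ∑ x ^ p * v x`, which send `step i` to `(i + 1) ^ p - i ^ p`, separate sums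
of steps: the first counts them, the second and third recover `a + b` and `a ^ 2 + b ^ 2` from
`step a + step b`. -/
lemma step_add_step_ne_step (a b e : ℕ) : step a + step b ≠ step e := by
  intro h
  have := congrArg (fun v : Pt => ∑ x ∈ range (a + b + e + 2), (x : ℤ) * v x) h
  simp only [Pi.add_apply, mul_add, sum_add_distrib] at this
  rw [sum_mul_step _ (by omega), sum_mul_step _ (by omega), sum_mul_step _ (by omega)] at this
  push_cast at this
  omega

lemma eq_or_eq_of_step_add_step_eq {a b a' b' : ℕ} (h : step a + step b = step a' + step b') :
    a' = a ∨ a' = b := by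
  have moment (p : ℕ) := congrArg (fun v : Pt => ∑ x ∈ range (a + b + a' + b' + 2),
    (x : ℤ) ^ p * v x) h
  have h₂ := moment 2
  have h₃ := moment 3
  simp only [Pi.add_apply, mul_add, sum_add_distrib] at h₂ h₃
  rw [sum_mul_step _ (by omega), sum_mul_step _ (by omega), sum_mul_step _ (by omega),
    sum_mul_step _ (by omega)] at h₂ h₃
  push_cast at h₂ h₃
  have hsum : (a : ℤ) + b = a' + b' := by nlinarith
  have hsq : (a : ℤ) ^ 2 + b ^ 2 = a' ^ 2 + b' ^ 2 := by nlinarith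
  have : ((a' : ℤ) - a) * (a' - b) = 0 := by nlinarith
  rcases mul_eq_zero.mp this with h' | h' <;> omega

structure IsGridPt (d k : ℕ) (v : Pt) : Prop where
  nonneg : ∀ i, 0 ≤ v i
  eq_zero : ∀ i, d < i → v i = 0
  sum_eq : ∑ i ∈ range (d + 1), v i = k

namespace IsGridPt

variable {d k : ℕ} {v : Pt}

lemma le (h : IsGridPt d k v) (i : ℕ) : v i ≤ k := by
  rcases le_or_gt i d with hi | hi
  · rw [← h.sum_eq]
    exact single_le_sum (fun j _ => h.nonneg j) (mem_range.mpr (by omega))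
  · rw [h.eq_zero i hi]; positivity

lemma add_step (h : IsGridPt d k v) {i : ℕ} (hi : i < d) (hv : 1 ≤ v i) :
    IsGridPt d k (v + step i) where
  nonneg x := by
    have := h.nonneg x
    simp only [Pi.add_apply, step]
    split_ifs <;> subst_vars <;> omega
  eq_zero x hx := by
    rw [Pi.add_apply, h.eq_zero x hx, step_of_ne (by omega) (by omega), add_zero]
  sum_eq := by
    simp only [Pi.add_apply]
    rw [sum_add_distrib, h.sum_eq, sum_step (by omega), add_zero]

lemma sub_step (h : IsGridPt d k v) {i : ℕ} (hi : i < d) (hv : 1 ≤ v (i + 1)) :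
    IsGridPt d k (v - step i) where
  nonneg x := by
    have := h.nonneg x
    simp only [Pi.sub_apply, step]
    split_ifs <;> subst_vars <;> omega
  eq_zero x hx := by
    rw [Pi.sub_apply, h.eq_zero x hx, step_of_ne (by omega) (by omega), sub_zero]
  sum_eq := by
    simp only [Pi.sub_apply]
    rw [sum_sub_distrib, h.sum_eq, sum_step (by omega), sub_zero]

end IsGridPt

lemma isGridPt_succ_iff {n k : ℕ} {v : Pt} :
    IsGridPt (n + 1) k v ∧ v (n + 1) = 0 ↔ IsGridPt n k v := by
  constructor
  · rintro ⟨h, hv⟩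
    refine ⟨h.nonneg, fun i hi => ?_, ?_⟩
    · rcases eq_or_ne i (n + 1) with rfl | hne
      · exact hv
      · exact h.eq_zero i (by omega)
    · rw [← h.sum_eq, sum_range_succ _ (n + 1), hv, add_zero]
  · intro h
    refine ⟨⟨h.nonneg, fun i hi => h.eq_zero i (by omega), ?_⟩, h.eq_zero _ (by omega)⟩
    rw [sum_range_succ, h.eq_zero _ (by omega), add_zero, h.sum_eq]

/-- A cell of the Kuhn triangulation of `k • Δᵈ`, listed by its vertices `f 0, …, f d`; `σ` is the
order in which the coordinates pass a unit to their successor. Continuing the path constantly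
beyond `d` makes the set of cells finite. -/
structure IsCellWith (d k : ℕ) (f : ℕ → Pt) (σ : ℕ → ℕ) : Prop where
  gridPt : ∀ j, IsGridPt d k (f j)
  eq_of_le : ∀ j, d ≤ j → f j = f d
  bijOn : Set.BijOn σ (Set.Iio d) (Set.Iio d)
  succ : ∀ j < d, f (j + 1) = f j + step (σ j)

def IsCell (d k : ℕ) (f : ℕ → Pt) : Prop := ∃ σ, IsCellWith d k f σ

section Path

variable {d : ℕ} {f : ℕ → Pt} {σ : ℕ → ℕ}

lemma eq_add_sum_step (h : ∀ j < d, f (j + 1) = f j + step (σ j)) {a b : ℕ} (hab : a ≤ b)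
    (hb : b ≤ d) : f b = f a + ∑ p ∈ Ico a b, step (σ p) := by
  induction b, hab using Nat.le_induction with
  | base => simp
  | succ b hab ih => rw [sum_Ico_succ_top hab, ← add_assoc, ← ih (by omega), h b (by omega)]

lemma apply_le_apply_of_forall_ne (h : ∀ j < d, f (j + 1) = f j + step (σ j)) {a b m : ℕ}
    (hab : a ≤ b) (hb : b ≤ d) (hm : ∀ p ∈ Ico a b, σ p ≠ m) : f a m ≤ f b m := by
  rw [eq_add_sum_step h hab hb, Pi.add_apply, Finset.sum_apply, le_add_iff_nonneg_right]
  exact sum_nonneg fun p hp => step_nonneg (Ne.symm (hm p hp))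

lemma apply_le_apply_of_forall_succ_ne (h : ∀ j < d, f (j + 1) = f j + step (σ j))
    {a b m : ℕ} (hab : a ≤ b) (hb : b ≤ d) (hm : ∀ p ∈ Ico a b, σ p + 1 ≠ m) :
    f b m ≤ f a m := by
  rw [eq_add_sum_step h hab hb, Pi.add_apply, Finset.sum_apply, add_le_iff_nonpos_right]
  exact sum_nonpos fun p hp => step_nonpos (Ne.symm (hm p hp))

lemma apply_sub_apply_eq (h : ∀ j < d, f (j + 1) = f j + step (σ j)) {a b : ℕ} (hab : a ≤ b)
    (hb : b ≤ d) (m : ℕ) :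
    f b m - f a m = #{p ∈ Ico a b | σ p + 1 = m} - #{p ∈ Ico a b | σ p = m} := by
  have hstep (i : ℕ) : step i m = (if i + 1 = m then 1 else 0) - (if i = m then 1 else 0) := by
    simp only [step]; split_ifs <;> omega
  rw [eq_add_sum_step h hab hb, Pi.add_apply, Finset.sum_apply, add_sub_cancel_left]
  simp only [hstep, sum_sub_distrib, sum_boole]

end Path

namespace IsCellWith

variable {d k : ℕ} {f : ℕ → Pt} {σ : ℕ → ℕ}

lemma inj (hf : IsCellWith d k f σ) {p q : ℕ} (hp : p < d) (hq : q < d) (h : σ p = σ q) :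
    p = q :=
  hf.bijOn.injOn (Set.mem_Iio.mpr hp) (Set.mem_Iio.mpr hq) h

lemma ne (hf : IsCellWith d k f σ) {p q : ℕ} (hp : p < d) (hq : q < d) (h : p ≠ q) :
    σ p ≠ σ q :=
  fun he => h (hf.inj hp hq he)

lemma lt (hf : IsCellWith d k f σ) {p : ℕ} (hp : p < d) : σ p < d :=
  hf.bijOn.mapsTo (Set.mem_Iio.mpr hp)

lemma succ_pred (hf : IsCellWith d k f σ) {j : ℕ} (h0 : 0 < j) (hj : j ≤ d) :
    f j = f (j - 1) + step (σ (j - 1)) := by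
  simpa only [Nat.sub_add_cancel h0] using hf.succ (j - 1) (by omega)

lemma abs_sub_le_one (hf : IsCellWith d k f σ) {a b : ℕ} (ha : a ≤ d) (hb : b ≤ d) (m : ℕ) :
    |f b m - f a m| ≤ 1 := by
  wlog hab : a ≤ b generalizing a b
  · rw [abs_sub_comm]; exact this hb ha (by omega)
  have hinj : Set.InjOn σ (Ico a b : Finset ℕ) :=
    hf.bijOn.injOn.mono fun p hp => by simp only [coe_Ico, Set.mem_Ico, Set.mem_Iio] at hp ⊢; omega
  have h₁ := card_filter_eq_le_one hinj m
  have h₂ := card_filter_eq_le_one (g := fun p => σ p + 1)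
    (fun p hp q hq hpq => hinj hp hq (by simpa using hpq)) m
  rw [apply_sub_apply_eq hf.succ hab hb, abs_le]
  constructor <;> omega

lemma one_le_last {n : ℕ} (hf : IsCellWith (n + 1) k f σ) : 1 ≤ f (n + 1) (n + 1) := by
  obtain ⟨p, hp, hpn⟩ := hf.bijOn.surjOn (Set.mem_Iio.mpr (Nat.lt_succ_self n))
  rw [Set.mem_Iio] at hp
  have hstep : f (p + 1) (n + 1) = f p (n + 1) + 1 := by
    rw [hf.succ p hp, Pi.add_apply, hpn, step_succ_self]
  have hmono := apply_le_apply_of_forall_ne hf.succ (m := n + 1) (by omega : p + 1 ≤ n + 1)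
    le_rfl fun q hq => (hf.lt (mem_Ico.mp hq).2).ne
  have := (hf.gridPt p).nonneg (n + 1)
  omega

lemma one_le_apply_self {n : ℕ} (hf : IsCellWith n k f σ) (hk : 0 < k) : 1 ≤ f n n := by
  cases n with
  | zero =>
    have := (hf.gridPt 0).sum_eq
    simp only [zero_add, range_one, sum_singleton] at this
    omega
  | succ n => exact hf.one_le_last

end IsCellWith

lemma IsCell.gridPt {d k : ℕ} {f : ℕ → Pt} (hf : IsCell d k f) (j : ℕ) : IsGridPt d k (f j) :=
  hf.choose_spec.gridPt j

lemma setOf_isCell_finite (d k : ℕ) : {f | IsCell d k f}.Finite := by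
  have hbox : (Set.univ.pi fun _ : Fin (d + 1) =>
      Set.univ.pi fun _ : Fin (d + 1) => Set.Icc (0 : ℤ) k).Finite :=
    Set.Finite.pi fun _ => Set.Finite.pi fun _ => Set.finite_Icc _ _
  refine Set.Finite.of_finite_image (f := fun f (j i : Fin (d + 1)) => f j i) (hbox.subset ?_) ?_
  · rintro _ ⟨f, hf, rfl⟩ j _ i _
    exact ⟨(hf.gridPt j).nonneg i, (hf.gridPt j).le i⟩
  · have hdet {f : ℕ → Pt} (hf : IsCell d k f) (j i : ℕ) :
        f j i = if i ≤ d then f (min j d) i else 0 := by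
      obtain ⟨σ, hf⟩ := hf
      have hj : f j = f (min j d) := by
        rcases le_total d j with hj | hj
        · rw [hf.eq_of_le j hj, min_eq_right hj]
        · rw [min_eq_left hj]
      split_ifs with hi
      · rw [hj]
      · exact (hf.gridPt j).eq_zero i (by omega)
    intro f hf g hg h
    funext j i
    rw [hdet hf, hdet hg]
    split_ifs with hi
    · exact congrFun (congrFun h ⟨min j d, by omega⟩) ⟨i, by omega⟩
    · rfl

noncomputable def cells (d k : ℕ) : Finset (ℕ → Pt) := (setOf_isCell_finite d k).toFinset

lemma mem_cells {d k : ℕ} {f : ℕ → Pt} : f ∈ cells d k ↔ IsCell d k f :=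
  (setOf_isCell_finite d k).mem_toFinset

/-- The facet of a cell of dimension `n + 1` opposite to its `j`-th vertex, as a path of
dimension `n`. -/
def facet (n : ℕ) (f : ℕ → Pt) (j : ℕ) : ℕ → Pt :=
  fun l => if min l n < j then f (min l n) else f (min l n + 1)

section Facet

variable {n : ℕ} {f g : ℕ → Pt} {j l : ℕ}

lemma facet_of_lt (hl : l ≤ n) (h : l < j) : facet n f j l = f l := by
  simp [facet, min_eq_left hl, h]

lemma facet_of_le (hl : l ≤ n) (h : j ≤ l) : facet n f j l = f (l + 1) := by
  simp [facet, min_eq_left hl, Nat.not_lt.mpr h]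

lemma exists_facet_eq (hj : j ≤ n + 1) (l : ℕ) :
    ∃ l' ≤ n + 1, l' ≠ j ∧ facet n f j l = f l' := by
  unfold facet
  split_ifs with h
  · exact ⟨_, by omega, by omega, rfl⟩
  · exact ⟨_, by omega, by omega, rfl⟩

lemma facet_apply_eq_zero_of_forall (hj : j ≤ n + 1) {m : ℕ}
    (h : ∀ l ≤ n + 1, l ≠ j → f l m = 0) (l : ℕ) : facet n f j l m = 0 := by
  obtain ⟨l', hl', hlj, hfl⟩ := exists_facet_eq (f := f) hj l
  rw [hfl]
  exact h l' hl' hlj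

lemma facet_congr (h : ∀ l, l ≠ j → g l = f l) : facet n g j = facet n f j := by
  funext l
  unfold facet
  split_ifs <;> exact h _ (by omega)

lemma eq_of_facet_eq (hj : j ≤ n + 1) (h : facet n f j = facet n g j) {l : ℕ}
    (hl : l ≤ n + 1) (hlj : l ≠ j) : f l = g l := by
  rcases Nat.lt_or_gt_of_ne hlj with hlt | hgt
  · rw [← facet_of_lt (f := f) (n := n) (l := l) (by omega) hlt, h, facet_of_lt (by omega) hlt]
  · obtain ⟨l, rfl⟩ : ∃ l', l = l' + 1 := ⟨l - 1, by omega⟩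
    rw [← facet_of_le (f := f) (n := n) (j := j) (l := l) (by omega) (by omega), h,
      facet_of_le (by omega) (by omega)]

lemma image_facet {β : Type*} [DecidableEq β] (c : Pt → β) (hj : j ≤ n + 1) :
    (range (n + 1)).image (fun l => c (facet n f j l)) =
      ((range (n + 2)).erase j).image (fun l => c (f l)) := by
  ext a
  simp only [mem_image, mem_erase, mem_range]
  constructor
  · rintro ⟨l, hl, rfl⟩
    rcases lt_or_ge l j with h | h
    · exact ⟨l, ⟨by omega, by omega⟩, by rw [facet_of_lt (by omega) h]⟩
    · exact ⟨l + 1, ⟨by omega, by omega⟩, by rw [facet_of_le (by omega) h]⟩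
  · rintro ⟨l, ⟨hlj, hl⟩, rfl⟩
    rcases lt_or_ge l j with h | h
    · exact ⟨l, by omega, by rw [facet_of_lt (by omega) h]⟩
    · obtain ⟨l, rfl⟩ : ∃ l', l = l' + 1 := ⟨l - 1, by omega⟩
      exact ⟨l, by omega, by rw [facet_of_le (by omega) (by omega)]⟩

end Facet

/-! The three ways of replacing one vertex of a cell of dimension `n + 1` so as to obtain
another cell with the same facet: `flipAt` exchanges the steps on either side of an inner
vertex, `advance` drops the first vertex and appends one, `retreat` drops the last vertex and
prepends one. -/

def flipAt (f : ℕ → Pt) (σ : ℕ → ℕ) (j : ℕ) : ℕ → Pt :=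
  Function.update f j (f (j - 1) + step (σ j))

def advance (n : ℕ) (f : ℕ → Pt) (σ : ℕ → ℕ) : ℕ → Pt :=
  fun l => if l ≤ n then f (l + 1) else f (n + 1) + step (σ 0)

def retreat (n : ℕ) (f : ℕ → Pt) (σ : ℕ → ℕ) : ℕ → Pt :=
  fun l => if l = 0 then f 0 - step (σ n) else f (min (l - 1) n)

section Partners

variable {n k : ℕ} {f : ℕ → Pt} {σ : ℕ → ℕ} {j : ℕ}

lemma isCellWith_flipAt (hf : IsCellWith (n + 1) k f σ) (h0 : 0 < j) (hj : j ≤ n)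
    (hv : 1 ≤ f (j - 1) (σ j)) :
    IsCellWith (n + 1) k (flipAt f σ j) (σ ∘ Equiv.swap (j - 1) j) where
  gridPt l := by
    rcases eq_or_ne l j with rfl | hl
    · rw [flipAt, Function.update_self]
      exact (hf.gridPt _).add_step (hf.lt (by omega)) hv
    · rw [flipAt, Function.update_of_ne hl]
      exact hf.gridPt l
  eq_of_le l hl := by
    simp only [flipAt, Function.update_of_ne (by omega : l ≠ j),
      Function.update_of_ne (by omega : n + 1 ≠ j)]
    exact hf.eq_of_le l hl
  bijOn := hf.bijOn.comp <| bijOn_Iio_of_injOn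
    (fun p hp => by rw [Equiv.swap_apply_def]; split_ifs <;> omega) (Equiv.injective _).injOn
  succ p hp := by
    have hprev := hf.succ_pred h0 (by omega)
    simp only [flipAt, Function.comp_apply]
    rcases eq_or_ne p (j - 1) with rfl | h₁
    · rw [Nat.sub_add_cancel h0, Function.update_self, Function.update_of_ne (by omega),
        Equiv.swap_apply_left]
    rcases eq_or_ne p j with rfl | h₂
    · rw [Function.update_of_ne (by omega), Function.update_self, Equiv.swap_apply_right,
        hf.succ p hp, hprev, add_right_comm]
    · rw [Function.update_of_ne (by omega), Function.update_of_ne h₂,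
        Equiv.swap_apply_of_ne_of_ne h₁ h₂]
      exact hf.succ p hp

lemma isCellWith_advance (hf : IsCellWith (n + 1) k f σ) (hv : 1 ≤ f (n + 1) (σ 0)) :
    IsCellWith (n + 1) k (advance n f σ) (σ ∘ fun p => if p = n then 0 else p + 1) where
  gridPt l := by
    unfold advance
    split_ifs
    · exact hf.gridPt _
    · exact (hf.gridPt _).add_step (hf.lt (by omega)) hv
  eq_of_le l hl := by simp [advance, show ¬ l ≤ n by omega]
  bijOn := hf.bijOn.comp <| bijOn_Iio_of_injOn (fun p hp => by split_ifs <;> omega)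
    fun a _ b _ h => by split_ifs at h <;> omega
  succ p hp := by
    simp only [advance, Function.comp_apply]
    rcases eq_or_ne p n with rfl | hpn
    · simp
    · simp only [show p ≤ n by omega, hpn, if_true, if_false, show p + 1 ≤ n by omega]
      exact hf.succ (p + 1) (by omega)

lemma isCellWith_retreat (hf : IsCellWith (n + 1) k f σ) (hv : 1 ≤ f 0 (σ n + 1)) :
    IsCellWith (n + 1) k (retreat n f σ) (σ ∘ fun p => if p = 0 then n else p - 1) where
  gridPt l := by
    unfold retreat
    split_ifs
    · exact (hf.gridPt _).sub_step (hf.lt (by omega)) hv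
    · exact hf.gridPt _
  eq_of_le l hl := by
    simp [retreat, show l ≠ 0 by omega, min_eq_right (show n ≤ l - 1 by omega)]
  bijOn := hf.bijOn.comp <| bijOn_Iio_of_injOn (fun p hp => by split_ifs <;> omega)
    fun a ha b hb h => by
      simp only [Set.mem_Iio] at ha hb; split_ifs at h <;> omega
  succ p hp := by
    simp only [retreat, Function.comp_apply]
    rcases eq_or_ne p 0 with rfl | hp0
    · simp
    · have := hf.succ (p - 1) (by omega)
      rw [Nat.sub_add_cancel (by omega)] at this
      simpa [hp0, min_eq_left (show p ≤ n by omega), min_eq_left (show p - 1 ≤ n by omega)]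

lemma facet_flipAt : facet n (flipAt f σ j) j = facet n f j :=
  facet_congr fun _ hl => Function.update_of_ne hl _ _

lemma facet_advance : facet n (advance n f σ) (n + 1) = facet n f 0 := by
  funext l
  simp [facet, advance, Nat.lt_succ_of_le (min_le_right l n)]

lemma facet_retreat : facet n (retreat n f σ) 0 = facet n f (n + 1) := by
  funext l
  simp [facet, retreat, Nat.lt_succ_of_le (min_le_right l n)]

lemma flipAt_ne {d : ℕ} (hf : IsCellWith d k f σ) (h0 : 0 < j) (hj : j < d) :
    flipAt f σ j ≠ f := by
  intro h
  have hj' := congrFun h j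
  have hprev := hf.succ_pred h0 (by omega)
  rw [flipAt, Function.update_self, hprev] at hj'
  have := hf.inj hj (by omega) (step_injective (add_left_cancel hj'))
  omega

end Partners

def extend (n : ℕ) (F : ℕ → Pt) : ℕ → Pt := fun l => if l ≤ n then F l else F n + step n

section Extend

variable {n k : ℕ} {f : ℕ → Pt} {σ : ℕ → ℕ}

lemma isCellWith_extend (hf : IsCellWith n k f σ) (hk : 0 < k) :
    IsCellWith (n + 1) k (extend n f) (fun p => if p = n then n else σ p) where
  gridPt l := by
    unfold extend
    split_ifs
    · exact (isGridPt_succ_iff.mpr (hf.gridPt l)).1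
    · exact (isGridPt_succ_iff.mpr (hf.gridPt n)).1.add_step (by omega)
        (hf.one_le_apply_self hk)
  eq_of_le l hl := by simp [extend, show ¬ l ≤ n by omega]
  bijOn := bijOn_Iio_of_injOn
    (fun p hp => by
      split_ifs
      · omega
      · have := hf.lt (by omega : p < n); omega)
    fun a ha b hb h => by
      simp only [Set.mem_Iio] at ha hb
      split_ifs at h with h₁ h₂ h₂
      · omega
      · have := hf.lt (by omega : b < n); omega
      · have := hf.lt (by omega : a < n); omega
      · exact hf.inj (by omega) (by omega) h
  succ p hp := by
    simp only [extend]
    rcases eq_or_ne p n with rfl | hpn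
    · simp
    · simp only [show p + 1 ≤ n by omega, show p ≤ n by omega, hpn, if_true, if_false]
      exact hf.succ p (by omega)

lemma facet_extend (hf : IsCellWith n k f σ) : facet n (extend n f) (n + 1) = f := by
  funext l
  simp only [facet, extend, Nat.lt_succ_of_le (min_le_right l n), min_le_right, if_true]
  rcases le_total l n with hl | hl
  · rw [min_eq_left hl]
  · rw [min_eq_right hl, hf.eq_of_le l hl]

end Extend

namespace IsCellWith

variable {n k : ℕ} {f g : ℕ → Pt} {σ τ : ℕ → ℕ} {j : ℕ}

/-! If the partner of `f` across a facet would leave the grid, that facet lies in a coordinate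
hyperplane. -/

lemma facet_inner_apply_eq_zero (hf : IsCellWith (n + 1) k f σ) (h0 : 0 < j) (hj : j ≤ n)
    (h : f (j - 1) (σ j) = 0) (l : ℕ) : facet n f j l (σ j) = 0 := by
  have hprev := hf.succ_pred h0 (by omega)
  have hnext : f (j + 1) (σ j) = step (σ (j - 1)) (σ j) - 1 := by
    rw [hf.succ j (by omega), hprev]
    simp only [Pi.add_apply, h, step_self, zero_add, sub_eq_add_neg]
  -- the coordinate `σ j` is raised by the step before `j` and lowered by the step after it
  have hraise : σ (j - 1) + 1 = σ j := by
    by_contra hne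
    have := step_nonpos (Ne.symm hne)
    have := (hf.gridPt (j + 1)).nonneg (σ j)
    omega
  refine facet_apply_eq_zero_of_forall (by omega) (fun l hl hlj => ?_) l
  have := (hf.gridPt l).nonneg (σ j)
  rcases Nat.lt_or_gt_of_ne hlj with hlt | hgt
  · have := apply_le_apply_of_forall_ne hf.succ (a := l) (b := j - 1) (m := σ j) (by omega)
      (by omega) fun p hp => by
        rw [mem_Ico] at hp
        exact hf.ne (by omega) (by omega) (by omega)
    omega
  · have := apply_le_apply_of_forall_succ_ne hf.succ (a := j + 1) (b := l) (m := σ j)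
      (by omega) hl fun p hp => by
        rw [mem_Ico] at hp
        have := hf.ne (p := p) (q := j - 1) (by omega) (by omega) (by omega)
        omega
    rw [← hraise, step_succ_self, hraise] at hnext
    omega

lemma facet_first_apply_eq_zero (hf : IsCellWith (n + 1) k f σ) (h : f (n + 1) (σ 0) = 0)
    (l : ℕ) : facet n f 0 l (σ 0) = 0 := by
  refine facet_apply_eq_zero_of_forall (by omega) (fun l hl hl0 => ?_) l
  have := apply_le_apply_of_forall_ne hf.succ (m := σ 0) hl le_rfl fun p hp => by
    rw [mem_Ico] at hp
    exact hf.ne (by omega) (by omega) (by omega)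
  have := (hf.gridPt l).nonneg (σ 0)
  omega

lemma facet_last_apply_eq_zero (hf : IsCellWith (n + 1) k f σ) (h : f 0 (σ n + 1) = 0)
    (l : ℕ) : facet n f (n + 1) l (σ n + 1) = 0 := by
  refine facet_apply_eq_zero_of_forall le_rfl (fun l hl hln => ?_) l
  have := apply_le_apply_of_forall_succ_ne hf.succ (m := σ n + 1) (Nat.zero_le l) hl
    fun p hp => by
      rw [mem_Ico] at hp
      have := hf.ne (p := p) (q := n) (by omega) (by omega) (by omega)
      omega
  have := (hf.gridPt l).nonneg (σ n + 1)
  omega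

lemma eq_of_facet_apply_eq_zero (hf : IsCellWith (n + 1) k f σ) (hj : j ≤ n + 1)
    (h : ∀ l, facet n f j l (n + 1) = 0) : j = n + 1 := by
  by_contra hne
  have hn := h n
  rw [facet_of_le le_rfl (by omega)] at hn
  have := hf.one_le_last
  omega

lemma facet_last (hf : IsCellWith (n + 1) k f σ) (hb : ∀ l, facet n f (n + 1) l (n + 1) = 0) :
    IsCellWith n k (facet n f (n + 1)) σ := by
  have hfacet (l : ℕ) : facet n f (n + 1) l = f (min l n) := by
    simp [facet, Nat.lt_succ_of_le (min_le_right l n)]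
  have hzero (l : ℕ) (hl : l ≤ n) : f l (n + 1) = 0 := by
    simpa [hfacet, min_eq_left hl] using hb l
  have hlt (p : ℕ) (hp : p < n) : σ p < n := by
    have := hf.lt (by omega : p < n + 1)
    refine lt_of_le_of_ne (by omega) fun h => ?_
    have := congrFun (hf.succ p (by omega)) (n + 1)
    rw [Pi.add_apply, h, step_succ_self, hzero p (by omega), hzero (p + 1) (by omega)] at this
    omega
  refine ⟨fun l => ?_, fun l hl => ?_, bijOn_Iio_of_injOn hlt (hf.bijOn.injOn.mono ?_),
    fun p hp => ?_⟩
  · rw [hfacet]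
    exact isGridPt_succ_iff.mp ⟨hf.gridPt _, by simpa [hfacet] using hb l⟩
  · rw [hfacet, hfacet, min_eq_right hl, min_self]
  · exact Set.Iio_subset_Iio (Nat.le_succ n)
  · rw [hfacet, hfacet, min_eq_left (by omega), min_eq_left (by omega)]
    exact hf.succ p (by omega)

lemma eq_of_forall_le {d : ℕ} (hf : IsCellWith d k f σ) (hg : IsCellWith d k g τ)
    (h : ∀ l ≤ d, f l = g l) : f = g := by
  funext l
  rcases le_or_gt l d with hl | hl
  · exact h l hl
  · rw [hf.eq_of_le l hl.le, hg.eq_of_le l hl.le, h d le_rfl]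

lemma eq_of_facet_zero_eq (hf : IsCellWith (n + 1) k f σ) (hg : IsCellWith (n + 1) k g τ)
    (h : facet n f 0 = facet n g 0) : f = g := by
  have hfg (l : ℕ) (h₁ : 1 ≤ l) (h₂ : l ≤ n + 1) : f l = g l :=
    eq_of_facet_eq (by omega) h h₂ (by omega)
  have hστ : ∀ p ∈ Set.Iio (n + 1), p ≠ 0 → σ p = τ p := fun p hp hp0 =>
    step_injective <| add_left_cancel (a := f p) <| by
      rw [Set.mem_Iio] at hp
      rw [← hf.succ p hp, hfg (p + 1) (by omega) (by omega), hg.succ p hp,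
        hfg p (by omega) (by omega)]
  have h0 := apply_eq_of_bijOn_of_forall_ne hf.bijOn hg.bijOn (by simp) hστ
  refine hf.eq_of_forall_le hg fun l hl => ?_
  rcases Nat.eq_zero_or_pos l with rfl | hl0
  · refine add_right_cancel (b := step (σ 0)) ?_
    rw [← hf.succ 0 (by omega), hfg 1 le_rfl (by omega), hg.succ 0 (by omega), h0]
  · exact hfg l hl0 hl

lemma eq_of_facet_last_eq (hf : IsCellWith (n + 1) k f σ) (hg : IsCellWith (n + 1) k g τ)
    (h : facet n f (n + 1) = facet n g (n + 1)) : f = g := by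
  have hfg (l : ℕ) (hl : l ≤ n) : f l = g l := eq_of_facet_eq le_rfl h (by omega) (by omega)
  have hστ : ∀ p ∈ Set.Iio (n + 1), p ≠ n → σ p = τ p := fun p hp hpn =>
    step_injective <| add_left_cancel (a := f p) <| by
      rw [Set.mem_Iio] at hp
      rw [← hf.succ p hp, hfg (p + 1) (by omega), hg.succ p hp, hfg p (by omega)]
  have hn := apply_eq_of_bijOn_of_forall_ne hf.bijOn hg.bijOn (by simp) hστ
  refine hf.eq_of_forall_le hg fun l hl => ?_
  rcases eq_or_ne l (n + 1) with rfl | hne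
  · rw [hf.succ n (by omega), hg.succ n (by omega), hfg n le_rfl, hn]
  · exact hfg l (by omega)

/-- Two steps separate the neighbours of an inner removed vertex, one step separates any two
consecutive vertices of a facet removed elsewhere. -/
lemma eq_of_facet_eq_facet (hf : IsCellWith (n + 1) k f σ) (hg : IsCellWith (n + 1) k g τ)
    (h0 : 0 < j) (hj : j ≤ n) {j' : ℕ} (h : facet n f j = facet n g j') :
    j' = j := by
  by_contra hne
  have hprev := hf.succ_pred h0 (by omega)
  have hf₂ : facet n f j j = facet n f j (j - 1) + (step (σ (j - 1)) + step (σ j)) := by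
    rw [facet_of_le hj le_rfl, facet_of_lt (by omega) (by omega), hf.succ j (by omega), hprev,
      add_assoc]
  obtain ⟨e, hg₁⟩ : ∃ e, facet n g j' j = facet n g j' (j - 1) + step e := by
    rcases Nat.lt_or_gt_of_ne hne with hlt | hgt
    · refine ⟨τ j, ?_⟩
      rw [facet_of_le hj (by omega), facet_of_le (by omega) (by omega), Nat.sub_add_cancel h0,
        hg.succ j (by omega)]
    · refine ⟨τ (j - 1), ?_⟩
      rw [facet_of_lt hj hgt, facet_of_lt (by omega) (by omega)]
      exact hg.succ_pred h0 (by omega)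
  rw [h, hg₁] at hf₂
  exact step_add_step_ne_step _ _ _ (add_left_cancel hf₂).symm

lemma eq_or_eq_flipAt_of_facet_eq (hf : IsCellWith (n + 1) k f σ)
    (hg : IsCellWith (n + 1) k g τ) (h0 : 0 < j) (hj : j ≤ n) (h : facet n g j = facet n f j) :
    g = f ∨ g = flipAt f σ j := by
  have hgf (l : ℕ) (hl : l ≤ n + 1) (hlj : l ≠ j) : g l = f l :=
    eq_of_facet_eq (by omega) h hl hlj
  have hsum : step (σ (j - 1)) + step (σ j) = step (τ (j - 1)) + step (τ j) := by
    have := hg.succ j (by omega)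
    rw [hg.succ_pred h0 (by omega), hgf (j + 1) (by omega) (by omega),
      hgf (j - 1) (by omega) (by omega), hf.succ j (by omega), hf.succ_pred h0 (by omega),
      add_assoc, add_assoc] at this
    exact add_left_cancel this
  have hgj : g j = f (j - 1) + step (τ (j - 1)) := by
    rw [hg.succ_pred h0 (by omega), hgf (j - 1) (by omega) (by omega)]
  have hoff (l : ℕ) (hlj : l ≠ j) : g l = f l := by
    rcases le_or_gt l (n + 1) with hl | hl
    · exact hgf l hl hlj
    · rw [hg.eq_of_le l hl.le, hf.eq_of_le l hl.le, hgf (n + 1) le_rfl (by omega)]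
  rcases eq_or_eq_of_step_add_step_eq hsum with he | he
  · left
    funext l
    rcases eq_or_ne l j with rfl | hlj
    · rw [hgj, he, ← hf.succ_pred h0 (by omega)]
    · exact hoff l hlj
  · right
    funext l
    rcases eq_or_ne l j with rfl | hlj
    · rw [flipAt, Function.update_self, hgj, he]
    · rw [flipAt, Function.update_of_ne hlj]
      exact hoff l hlj

end IsCellWith

def IsRainbow (c : Pt → ℕ) (d : ℕ) (f : ℕ → Pt) : Prop :=
  (range (d + 1)).image (fun j => c (f j)) = range (d + 1)

def IsSpernerColoring (c : Pt → ℕ) (d k : ℕ) : Prop :=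
  ∀ v, IsGridPt d k v → c v ≤ d ∧ v (c v) ≠ 0

namespace IsSpernerColoring

variable {c : Pt → ℕ} {n k : ℕ}

lemma pos {d : ℕ} (hc : IsSpernerColoring c d k) : 0 < k := by
  by_contra hk
  obtain rfl : k = 0 := by omega
  exact (hc 0 ⟨fun _ => le_rfl, fun _ _ => rfl, by simp⟩).2 rfl

lemma of_succ (hc : IsSpernerColoring c (n + 1) k) : IsSpernerColoring c n k := by
  intro v hv
  obtain ⟨hv', hvn⟩ := isGridPt_succ_iff.mpr hv
  obtain ⟨hle, hne⟩ := hc v hv'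
  refine ⟨?_, hne⟩
  by_contra h
  exact hne (by rw [show c v = n + 1 by omega, hvn])

lemma exists_apply_ne_zero (hc : IsSpernerColoring c (n + 1) k) {F : ℕ → Pt}
    (hF : ∀ l, IsGridPt (n + 1) k (F l)) (hr : IsRainbow c n F) {m : ℕ} (hm : m ≤ n) :
    ∃ l, F l m ≠ 0 := by
  have : m ∈ (range (n + 1)).image (fun l => c (F l)) := by
    rw [hr, mem_range]; omega
  obtain ⟨l, -, hl⟩ := mem_image.mp this
  exact ⟨l, hl ▸ (hc _ (hF l)).2⟩

end IsSpernerColoring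

section Counting

open scoped Classical

noncomputable def cofaces (n k : ℕ) (F : ℕ → Pt) : Finset ((ℕ → Pt) × ℕ) :=
  {p ∈ cells (n + 1) k ×ˢ range (n + 2) | facet n p.1 p.2 = F}

lemma mem_cofaces {n k : ℕ} {F g : ℕ → Pt} {j : ℕ} :
    (g, j) ∈ cofaces n k F ↔ IsCell (n + 1) k g ∧ j ≤ n + 1 ∧ facet n g j = F := by
  simp only [cofaces, mem_filter, mem_product, mem_cells, mem_range]
  constructor
  · rintro ⟨⟨hg, hj⟩, hF⟩; exact ⟨hg, by omega, hF⟩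
  · rintro ⟨hg, hj, hF⟩; exact ⟨⟨hg, by omega⟩, hF⟩

namespace IsCellWith

variable {n k : ℕ} {f : ℕ → Pt} {σ : ℕ → ℕ} {j : ℕ}

lemma cofaces_of_boundary (hf : IsCellWith (n + 1) k f σ) (hj : j ≤ n + 1)
    (hb : ∀ l, facet n f j l (n + 1) = 0) : cofaces n k (facet n f j) = {(f, n + 1)} := by
  obtain rfl := hf.eq_of_facet_apply_eq_zero hj hb
  ext ⟨g, j'⟩
  simp only [mem_cofaces, mem_singleton, Prod.mk.injEq]
  constructor
  · rintro ⟨⟨τ, hg⟩, hj', hgf⟩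
    obtain rfl := hg.eq_of_facet_apply_eq_zero hj' (hgf ▸ hb)
    exact ⟨hg.eq_of_facet_last_eq hf hgf, rfl⟩
  · rintro ⟨rfl, rfl⟩
    exact ⟨⟨σ, hf⟩, le_rfl, rfl⟩

lemma cofaces_inner (hf : IsCellWith (n + 1) k f σ) (h0 : 0 < j) (hj : j ≤ n)
    (hv : 1 ≤ f (j - 1) (σ j)) :
    cofaces n k (facet n f j) = {(f, j), (flipAt f σ j, j)} := by
  ext ⟨g, j'⟩
  simp only [mem_cofaces, mem_insert, mem_singleton, Prod.mk.injEq]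
  constructor
  · rintro ⟨⟨τ, hg⟩, -, hgf⟩
    obtain rfl := hf.eq_of_facet_eq_facet hg h0 hj hgf.symm
    rcases hf.eq_or_eq_flipAt_of_facet_eq hg h0 hj hgf with rfl | rfl <;> simp
  · rintro (⟨rfl, rfl⟩ | ⟨rfl, rfl⟩)
    · exact ⟨⟨σ, hf⟩, by omega, rfl⟩
    · exact ⟨⟨_, isCellWith_flipAt hf h0 hj hv⟩, by omega, facet_flipAt⟩

lemma cofaces_first (hf : IsCellWith (n + 1) k f σ) (hv : 1 ≤ f (n + 1) (σ 0)) :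
    cofaces n k (facet n f 0) = {(f, 0), (advance n f σ, n + 1)} := by
  have ha := isCellWith_advance hf hv
  ext ⟨g, j'⟩
  simp only [mem_cofaces, mem_insert, mem_singleton, Prod.mk.injEq]
  constructor
  · rintro ⟨⟨τ, hg⟩, hj', hgf⟩
    obtain rfl | rfl : j' = 0 ∨ j' = n + 1 := by
      by_contra! hne
      have := hg.eq_of_facet_eq_facet hf (by omega) (by omega) hgf
      omega
    · exact .inl ⟨hg.eq_of_facet_zero_eq hf hgf, rfl⟩
    · exact .inr ⟨hg.eq_of_facet_last_eq ha (hgf.trans facet_advance.symm), rfl⟩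
  · rintro (⟨rfl, rfl⟩ | ⟨rfl, rfl⟩)
    · exact ⟨⟨σ, hf⟩, by omega, rfl⟩
    · exact ⟨⟨_, ha⟩, le_rfl, facet_advance⟩

lemma cofaces_last (hf : IsCellWith (n + 1) k f σ) (hv : 1 ≤ f 0 (σ n + 1)) :
    cofaces n k (facet n f (n + 1)) = {(retreat n f σ, 0), (f, n + 1)} := by
  have hr := isCellWith_retreat hf hv
  ext ⟨g, j'⟩
  simp only [mem_cofaces, mem_insert, mem_singleton, Prod.mk.injEq]
  constructor
  · rintro ⟨⟨τ, hg⟩, hj', hgf⟩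
    obtain rfl | rfl : j' = 0 ∨ j' = n + 1 := by
      by_contra! hne
      have := hg.eq_of_facet_eq_facet hf (by omega) (by omega) hgf
      omega
    · exact .inl ⟨hg.eq_of_facet_zero_eq hr (hgf.trans facet_retreat.symm), rfl⟩
    · exact .inr ⟨hg.eq_of_facet_last_eq hf hgf, rfl⟩
  · rintro (⟨rfl, rfl⟩ | ⟨rfl, rfl⟩)
    · exact ⟨⟨_, hr⟩, by omega, facet_retreat⟩
    · exact ⟨⟨σ, hf⟩, le_rfl, rfl⟩

/-- A rainbow facet off the boundary hyperplane `x (n + 1) = 0` lies in exactly two cells: by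
the Sperner condition it lies in no coordinate hyperplane, so the partner never leaves the grid. -/
lemma card_cofaces_of_not_boundary {c : Pt → ℕ} (hc : IsSpernerColoring c (n + 1) k)
    (hf : IsCellWith (n + 1) k f σ) (hj : j ≤ n + 1) (hr : IsRainbow c n (facet n f j))
    (hb : ¬ ∀ l, facet n f j l (n + 1) = 0) : #(cofaces n k (facet n f j)) = 2 := by
  have hfree {m : ℕ} (hm : m ≤ n) (hzero : ∀ l, facet n f j l m = 0) : False := by
    have hF (l : ℕ) : IsGridPt (n + 1) k (facet n f j l) := by
      obtain ⟨l', -, -, e⟩ := exists_facet_eq (f := f) hj l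
      exact e ▸ hf.gridPt l'
    obtain ⟨l, hl⟩ := hc.exists_apply_ne_zero hF hr hm
    exact hl (hzero l)
  rcases (by omega : j = 0 ∨ (0 < j ∧ j ≤ n) ∨ j = n + 1) with rfl | ⟨h0, hjn⟩ | rfl
  · have hv : 1 ≤ f (n + 1) (σ 0) := by
      by_contra hv
      have := (hf.gridPt (n + 1)).nonneg (σ 0)
      exact hfree (Nat.le_of_lt_succ (hf.lt (by omega)))
        (hf.facet_first_apply_eq_zero (by omega))
    rw [hf.cofaces_first hv, card_pair (by simp)]
  · have hv : 1 ≤ f (j - 1) (σ j) := by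
      by_contra hv
      have := (hf.gridPt (j - 1)).nonneg (σ j)
      exact hfree (Nat.le_of_lt_succ (hf.lt (by omega)))
        (hf.facet_inner_apply_eq_zero h0 hjn (by omega))
    rw [hf.cofaces_inner h0 hjn hv, card_pair (by simpa using (flipAt_ne hf h0 (by omega)).symm)]
  · have hv : 1 ≤ f 0 (σ n + 1) := by
      by_contra hv
      have := (hf.gridPt 0).nonneg (σ n + 1)
      have hzero := hf.facet_last_apply_eq_zero (by omega)
      rcases Nat.lt_or_ge (σ n) n with hlt | hge
      · exact hfree hlt hzero
      · exact hb (by rwa [show σ n = n by have := hf.lt (Nat.lt_succ_self n); omega] at hzero)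
    rw [hf.cofaces_last hv, card_pair (by simp)]

end IsCellWith

noncomputable def rainbowCells (c : Pt → ℕ) (d k : ℕ) : Finset (ℕ → Pt) :=
  {f ∈ cells d k | IsRainbow c d f}

noncomputable def doors (c : Pt → ℕ) (n k : ℕ) : Finset ((ℕ → Pt) × ℕ) :=
  {p ∈ cells (n + 1) k ×ˢ range (n + 2) | IsRainbow c n (facet n p.1 p.2)}

variable {c : Pt → ℕ} {n k : ℕ}

lemma card_doors_of_cell (hc : IsSpernerColoring c (n + 1) k) {f : ℕ → Pt}
    (hf : IsCell (n + 1) k f) :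
    (#{j ∈ range (n + 2) | IsRainbow c n (facet n f j)} : ZMod 2) =
      if IsRainbow c (n + 1) f then 1 else 0 := by
  have hdoor : {j ∈ range (n + 2) | IsRainbow c n (facet n f j)} =
      {j ∈ range (n + 2) | ((range (n + 2)).erase j).image (fun l => c (f l)) = range (n + 1)} :=
    filter_congr fun j hj => by rw [IsRainbow, image_facet c (by simpa [Nat.lt_succ_iff] using hj)]
  rw [hdoor]
  split_ifs with hr
  · rw [card_filter_image_erase_eq_one (card_range _) hr, Nat.cast_one]
  · exact ZMod.natCast_eq_zero_iff_even.mpr <| even_card_filter_image_erase_eq (card_range _)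
      (fun j _ => (hc _ (hf.gridPt j)).1) hr

lemma card_rainbowCells_succ (hc : IsSpernerColoring c (n + 1) k) :
    (#(rainbowCells c (n + 1) k) : ZMod 2) = #(doors c n k) := by
  calc (#(rainbowCells c (n + 1) k) : ZMod 2)
      = ∑ f ∈ cells (n + 1) k, if IsRainbow c (n + 1) f then (1 : ZMod 2) else 0 := by
        rw [rainbowCells, card_filter, Nat.cast_sum]
        simp only [Nat.cast_ite, Nat.cast_one, Nat.cast_zero]
    _ = ∑ f ∈ cells (n + 1) k, (#{j ∈ range (n + 2) | IsRainbow c n (facet n f j)} : ZMod 2) :=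
        sum_congr rfl fun f hf => (card_doors_of_cell hc (mem_cells.mp hf)).symm
    _ = #(doors c n k) := by
        rw [doors, card_filter, sum_product, Nat.cast_sum]
        refine sum_congr rfl fun f _ => ?_
        rw [card_filter, Nat.cast_sum]

/-- Each door facet is counted once if it lies on the boundary face `x (n + 1) = 0`, and twice
otherwise. -/
lemma card_doors (hc : IsSpernerColoring c (n + 1) k) :
    (#(doors c n k) : ZMod 2) =
      #{F ∈ (doors c n k).image (fun p => facet n p.1 p.2) | ∀ l, F l (n + 1) = 0} := by
  rw [card_eq_sum_card_image (fun p => facet n p.1 p.2), card_filter]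
  push_cast
  refine sum_congr rfl fun F hF => ?_
  obtain ⟨⟨f, j⟩, hp, rfl⟩ := mem_image.mp hF
  simp only [doors, mem_filter, mem_product, mem_cells, mem_range] at hp
  obtain ⟨⟨⟨σ, hf⟩, hj⟩, hr⟩ := hp
  have hfiber : {p ∈ doors c n k | facet n p.1 p.2 = facet n f j} = cofaces n k (facet n f j) := by
    ext ⟨g, j'⟩
    simp only [doors, cofaces, mem_filter]
    constructor
    · rintro ⟨⟨hg, -⟩, he⟩; exact ⟨hg, he⟩
    · rintro ⟨hg, he⟩; exact ⟨⟨hg, he ▸ hr⟩, he⟩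
  rw [hfiber]
  split_ifs with hb
  · rw [hf.cofaces_of_boundary (by omega) hb, card_singleton, Nat.cast_one]
  · rw [hf.card_cofaces_of_not_boundary hc (by omega) hr hb]
    rfl

lemma filter_image_doors (hc : IsSpernerColoring c (n + 1) k) :
    {F ∈ (doors c n k).image (fun p => facet n p.1 p.2) | ∀ l, F l (n + 1) = 0} =
      rainbowCells c n k := by
  ext F
  simp only [mem_filter, mem_image, rainbowCells, mem_cells, doors, mem_product, mem_range,
    Prod.exists]
  constructor
  · rintro ⟨⟨f, j, ⟨⟨⟨σ, hf⟩, hj⟩, hr⟩, rfl⟩, hb⟩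
    obtain rfl := hf.eq_of_facet_apply_eq_zero (by omega) hb
    exact ⟨⟨σ, hf.facet_last hb⟩, hr⟩
  · rintro ⟨⟨σ, hF⟩, hr⟩
    refine ⟨⟨extend n F, n + 1, ⟨⟨⟨_, isCellWith_extend hF hc.pos⟩, by omega⟩, ?_⟩,
      facet_extend hF⟩, fun l => (hF.gridPt l).eq_zero _ (by omega)⟩
    rwa [facet_extend hF]

lemma card_rainbowCells_zero (hc : IsSpernerColoring c 0 k) : #(rainbowCells c 0 k) = 1 := by
  have hgrid {v : Pt} (hv : IsGridPt 0 k v) : v = Pi.single 0 (k : ℤ) := by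
    funext i
    rcases eq_or_ne i 0 with rfl | hi
    · simpa using hv.sum_eq
    · rw [hv.eq_zero i (by omega), Pi.single_eq_of_ne hi]
  refine card_eq_one.mpr ⟨fun _ => Pi.single 0 (k : ℤ), eq_singleton_iff_unique_mem.mpr ⟨?_, ?_⟩⟩
  · have hv : IsGridPt 0 k (Pi.single 0 (k : ℤ)) :=
      ⟨fun i => by by_cases hi : i = 0 <;> simp [hi], fun i hi => by simp [show i ≠ 0 by omega],
        by simp⟩
    refine mem_filter.mpr ⟨mem_cells.mpr ⟨id, fun _ => hv, fun _ _ => rfl, by simp, by simp⟩, ?_⟩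
    simp [IsRainbow, Nat.le_zero.mp (hc _ hv).1]
  · rintro f hf
    obtain ⟨σ, hf⟩ := mem_cells.mp (mem_filter.mp hf).1
    funext j
    rw [hf.eq_of_le j (Nat.zero_le j), hgrid (hf.gridPt 0)]

/-- **Sperner's lemma** for the Kuhn triangulation of `k • Δᵈ`. -/
theorem odd_card_rainbowCells : ∀ {d : ℕ}, IsSpernerColoring c d k → Odd #(rainbowCells c d k)
  | 0, hc => by rw [card_rainbowCells_zero hc]; exact odd_one
  | n + 1, hc => by
    rw [← ZMod.natCast_eq_one_iff_odd, card_rainbowCells_succ hc, card_doors hc,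
      filter_image_doors hc, ZMod.natCast_eq_one_iff_odd]
    exact odd_card_rainbowCells hc.of_succ

end Counting

noncomputable def scale (n k : ℕ) (v : Pt) : Fin (n + 1) → ℝ := fun i => (v i : ℝ) / k

lemma scale_mem_stdSimplex {n k : ℕ} {v : Pt} (hk : 0 < k) (hv : IsGridPt n k v) :
    scale n k v ∈ stdSimplex ℝ (Fin (n + 1)) := by
  refine ⟨fun i => div_nonneg (by exact_mod_cast hv.nonneg i) k.cast_nonneg, ?_⟩
  have hsum : ∑ i ∈ range (n + 1), (v i : ℝ) = k := by exact_mod_cast hv.sum_eq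
  simp only [scale]
  rw [← sum_div, Fin.sum_univ_eq_sum_range (fun i => (v i : ℝ)), hsum,
    div_self (by positivity)]

lemma IsCellWith.dist_scale_le {n k : ℕ} {f : ℕ → Pt} {σ : ℕ → ℕ} (hf : IsCellWith n k f σ)
    {a b : ℕ} (ha : a ≤ n) (hb : b ≤ n) : dist (scale n k (f a)) (scale n k (f b)) ≤ 1 / k := by
  refine (dist_pi_le_iff (by positivity)).mpr fun m => ?_
  rw [scale, scale, Real.dist_eq, ← sub_div, abs_div, Nat.abs_cast]
  gcongr
  exact_mod_cast hf.abs_sub_le_one hb ha m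

variable {n : ℕ} {X : Fin (n + 1) → Set (Fin (n + 1) → ℝ)}

/-- Colour each grid point by a set of the cover containing it: the facet condition makes this a
Sperner colouring. -/
lemma exists_isSpernerColoring {k : ℕ} (hk : 0 < k)
    (hcover : stdSimplex ℝ (Fin (n + 1)) ⊆ ⋃ i, X i)
    (hfacet : ∀ i, Disjoint (X i) {x ∈ stdSimplex ℝ (Fin (n + 1)) | x i = 0}) :
    ∃ c : Pt → ℕ, IsSpernerColoring c n k ∧
      ∀ v (i : Fin (n + 1)), IsGridPt n k v → c v = i → scale n k v ∈ X i := by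
  have hex (v : Pt) : ∃ i : Fin (n + 1), IsGridPt n k v → scale n k v ∈ X i := by
    by_cases hv : IsGridPt n k v
    · obtain ⟨i, hi⟩ := Set.mem_iUnion.mp (hcover (scale_mem_stdSimplex hk hv))
      exact ⟨i, fun _ => hi⟩
    · exact ⟨0, fun h => absurd h hv⟩
  choose col hcol using hex
  refine ⟨fun v => col v, fun v hv => ⟨Nat.le_of_lt_succ (col v).isLt, fun hzero => ?_⟩,
    fun v i hv hi => Fin.ext hi ▸ hcol v hv⟩
  exact Set.disjoint_left.mp (hfacet (col v)) (hcol v hv)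
    ⟨scale_mem_stdSimplex hk hv, by simp [scale, hzero]⟩

lemma exists_forall_mem_forall_dist_le {k : ℕ} (hk : 0 < k)
    (hcover : stdSimplex ℝ (Fin (n + 1)) ⊆ ⋃ i, X i)
    (hfacet : ∀ i, Disjoint (X i) {x ∈ stdSimplex ℝ (Fin (n + 1)) | x i = 0}) :
    ∃ y : Fin (n + 1) → Fin (n + 1) → ℝ, (∀ i, y i ∈ X i) ∧ ∀ i i', dist (y i) (y i') ≤ 1 / k := by
  classical
  obtain ⟨c, hc, hcX⟩ := exists_isSpernerColoring hk hcover hfacet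
  obtain ⟨f, hf⟩ := card_pos.mp (odd_card_rainbowCells hc).pos
  obtain ⟨⟨σ, hf⟩, hr⟩ := (mem_filter.mp hf).imp_left mem_cells.mp
  have hvertex (i : Fin (n + 1)) : ∃ j ≤ n, c (f j) = i := by
    obtain ⟨j, hj, hji⟩ := mem_image.mp (hr ▸ mem_range.mpr i.isLt : (i : ℕ) ∈ _)
    exact ⟨j, Nat.le_of_lt_succ (mem_range.mp hj), hji⟩
  choose j hjn hjc using hvertex
  exact ⟨fun i => scale n k (f (j i)), fun i => hcX _ i (hf.gridPt _) (hjc i),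
    fun i i' => hf.dist_scale_le (hjn i) (hjn i')⟩

end Sperner

open Sperner in
/-- **The Knaster–Kuratowski–Mazurkiewicz theorem.**
If the standard `n`-simplex `Δⁿ ⊂ ℝ^{n+1}` is covered by closed sets
`X 0, …, X n` such that each `X i` is disjoint from the `i`-th facet
`{x ∈ Δⁿ | x i = 0}`, then all the sets have a common point. -/
theorem stmt0 (n : ℕ) (X : Fin (n + 1) → Set (Fin (n + 1) → ℝ))
    (hclosed : ∀ i, IsClosed (X i))
    (hsub : ∀ i, X i ⊆ stdSimplex ℝ (Fin (n + 1)))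
    (hcover : stdSimplex ℝ (Fin (n + 1)) ⊆ ⋃ i, X i)
    (hfacet : ∀ i, Disjoint (X i) {x ∈ stdSimplex ℝ (Fin (n + 1)) | x i = 0}) :
    (⋂ i, X i).Nonempty := by
  refine nonempty_iInter_of_forall_dist_le (isCompact_stdSimplex ℝ (Fin (n + 1))) hclosed
    (hsub 0) fun ε hε => ?_
  obtain ⟨k, hk⟩ := exists_nat_one_div_lt hε
  obtain ⟨y, hyX, hyd⟩ := exists_forall_mem_forall_dist_le k.succ_pos hcover hfacet
  exact ⟨y, hyX, fun i => (hyd i 0).trans (by exact_mod_cast hk.le)⟩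
end

section
/- Let $Q^n = [0,1]^n$ be the unit cube and let $X_1, \ldots, X_N$ be closed subsets covering $Q^n$ such that no point of $Q^n$ lies in more than $n$ of them. Then some $X_i$ intersects two opposite facets of $Q^n$, i.e., there exist $i$ and a coordinate $j$ such that $X_i$ meets both $\{x \in Q^n : x_j = 0\}$ and $\{x \in Q^n : x_j = 1\}$. -/
/-!
Suppose no `X i` meets two opposite facets. Label a point of the grid `(1/k) ℤⁿ ∩ [0,1]ⁿ` by
the least `j` such that the set `X i` containing it meets the facet `x_j = 0` (or by `n` if
there is none). Then a point with `x_j = 0` gets a label `≤ j`, and a point with `x_j = 1`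
cannot get the label `j`, as its set would meet both facets `x_j = 0` and `x_j = 1`. This is
the boundary condition of Kuhn's cubical form of Sperner's lemma, which gives a simplex of the
Kuhn triangulation of mesh `1/k` whose `n + 1` vertices carry all labels `0, …, n`; their sets
are therefore `n + 1` distinct `X i` meeting a set of diameter `1/k`. A Lebesgue number
argument turns multiplicity `≤ n` into a `δ > 0` such that every `δ`-ball around a point of the
cube meets at most `n` of the sets, a contradiction once `1/k < δ`.

Kuhn's lemma is proved by the door-to-door parity argument: a facet of a simplex is a door if
its `n` vertices carry the labels `0, …, n - 1`. The number of doors of a single simplex is odd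
exactly when it is fully labelled; interior doors come in pairs, since a facet inside the cube
is shared by exactly two simplices; and the doors on the boundary are the fully labelled
simplices of the face where the last coordinate vanishes, which by induction are odd in number.
-/

open Finset
open Set (MapsTo SurjOn InjOn)

theorem Finset.even_card_of_involution {α : Type*} {s : Finset α} (g : α → α)
    (hg : ∀ a ∈ s, g a ∈ s) (hgg : ∀ a ∈ s, g (g a) = a) (hne : ∀ a ∈ s, g a ≠ a) :
    Even #s := by
  have hsum : ∑ _a ∈ s, (1 : ZMod 2) = 0 :=
    sum_involution (fun a _ => g a) (fun _ _ => by decide) (fun a ha _ => hne a ha) hg hgg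
  rw [sum_const, nsmul_one] at hsum
  exact (ZMod.natCast_eq_zero_iff_even).1 hsum

lemma finRotate_inv_zero (d : ℕ) : (finRotate (d + 1))⁻¹ 0 = Fin.last d := by
  rw [Equiv.Perm.inv_eq_iff_eq, finRotate_last]

lemma finRotate_inv_succ {d : ℕ} (i : Fin d) : (finRotate (d + 1))⁻¹ i.succ = i.castSucc := by
  rw [Equiv.Perm.inv_eq_iff_eq, finRotate_apply, Fin.coeSucc_eq_succ]

lemma mem_coe_range_erase {r t d : ℕ} :
    r ∈ (((range d).erase t : Finset ℕ) : Set ℕ) ↔ r ≠ t ∧ r < d := by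
  simp [and_comm]

section OmittedLabel

open scoped Classical

variable {α : Type*} [DecidableEq α] {A : Finset α} {d : ℕ} {ℓ : α → ℕ}

lemma filter_surjOn_erase_eq_singleton (hA : #A = d + 1)
    (hmaps : MapsTo ℓ A (range (d + 1) : Finset ℕ))
    (hsurj : SurjOn ℓ A (range (d + 1) : Finset ℕ)) :
    ∃ r, {t ∈ A | SurjOn ℓ (A.erase t : Finset α) (range d : Finset ℕ)} = {r} := by
  have hinj : InjOn ℓ A := injOn_of_surjOn_of_card_le ℓ hmaps hsurj (by simp [hA])
  obtain ⟨r, hr, hrd⟩ := hsurj (mem_range.2 d.lt_succ_self)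
  refine ⟨r, eq_singleton_iff_unique_mem.2 ⟨mem_filter.2 ⟨hr, fun m hm => ?_⟩, ?_⟩⟩
  · obtain ⟨r', hr', rfl⟩ := hsurj (mem_range.2 (Nat.lt_succ_of_lt (mem_range.1 hm)))
    refine ⟨r', mem_erase.2 ⟨?_, hr'⟩, rfl⟩
    rintro rfl
    exact (mem_range.1 hm).ne hrd
  · intro t ht
    obtain ⟨ht, hdoor⟩ := mem_filter.1 ht
    rcases Nat.lt_succ_iff_lt_or_eq.1 (mem_range.1 (hmaps ht)) with hlt | heq
    · obtain ⟨r', hr', hr't⟩ := hdoor (mem_range.2 hlt)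
      exact absurd (hinj (mem_of_mem_erase hr') ht hr't) (ne_of_mem_erase hr')
    · exact hinj ht hr (heq.trans hrd.symm)

lemma filter_surjOn_erase_eq_pair (hA : #A = d + 1) (hmaps : MapsTo ℓ A (range d : Finset ℕ))
    (hsurj : SurjOn ℓ A (range d : Finset ℕ)) :
    ∃ t₁ t₂, t₁ ≠ t₂ ∧
      {t ∈ A | SurjOn ℓ (A.erase t : Finset α) (range d : Finset ℕ)} = {t₁, t₂} := by
  obtain ⟨t₁, ht₁, t₂, ht₂, hne, heq⟩ :=
    exists_ne_map_eq_of_card_lt_of_maps_to (by simp [hA]) hmaps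
  refine ⟨t₁, t₂, hne, Finset.ext fun t => ?_⟩
  simp only [mem_filter, mem_insert, mem_singleton]
  constructor
  · rintro ⟨ht, hdoor⟩
    by_contra hnot
    rw [not_or] at hnot
    have hinj : InjOn ℓ (A.erase t) := injOn_of_surjOn_of_card_le ℓ
      (hmaps.mono_left (erase_subset t A)) hdoor (by simp [card_erase_of_mem ht, hA])
    exact hne (hinj (mem_erase.2 ⟨Ne.symm hnot.1, ht₁⟩) (mem_erase.2 ⟨Ne.symm hnot.2, ht₂⟩) heq)
  · have hdoor : ∀ t ∈ A, ∀ t' ∈ A, t ≠ t' → ℓ t = ℓ t' →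
        SurjOn ℓ (A.erase t : Finset α) (range d : Finset ℕ) := by
      intro t ht t' ht' htt' hℓ m hm
      obtain ⟨r, hr, rfl⟩ := hsurj hm
      by_cases hrt : r = t
      · subst hrt
        exact ⟨t', mem_erase.2 ⟨htt'.symm, ht'⟩, hℓ.symm⟩
      · exact ⟨r, mem_erase.2 ⟨hrt, hr⟩, rfl⟩
    rintro (rfl | rfl)
    · exact ⟨ht₁, hdoor t ht₁ t₂ ht₂ hne heq⟩
    · exact ⟨ht₂, hdoor t ht₂ t₁ ht₁ hne.symm heq.symm⟩

theorem odd_card_filter_surjOn_erase_iff (hA : #A = d + 1)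
    (hmaps : MapsTo ℓ A (range (d + 1) : Finset ℕ)) :
    Odd #{t ∈ A | SurjOn ℓ (A.erase t : Finset α) (range d : Finset ℕ)} ↔
      SurjOn ℓ A (range (d + 1) : Finset ℕ) := by
  by_cases hfull : SurjOn ℓ A (range (d + 1) : Finset ℕ)
  · obtain ⟨r, hr⟩ := filter_surjOn_erase_eq_singleton hA hmaps hfull
    rw [hr, card_singleton]
    exact iff_of_true odd_one hfull
  by_cases hlow : SurjOn ℓ A (range d : Finset ℕ)
  · have hmaps' : MapsTo ℓ A (range d : Finset ℕ) := by
      intro r hr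
      refine mem_range.2 (lt_of_le_of_ne (Nat.lt_succ_iff.1 (mem_range.1 (hmaps hr))) ?_)
      intro hrd
      refine hfull fun m hm => ?_
      rcases Nat.lt_succ_iff_lt_or_eq.1 (mem_range.1 hm) with hlt | rfl
      · exact hlow (mem_range.2 hlt)
      · exact ⟨r, hr, hrd⟩
    obtain ⟨t₁, t₂, hne, heq⟩ := filter_surjOn_erase_eq_pair hA hmaps' hlow
    rw [heq, card_pair hne]
    exact iff_of_false (by decide) hfull
  · have hempty : {t ∈ A | SurjOn ℓ (A.erase t : Finset α) (range d : Finset ℕ)} = ∅ :=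
      filter_false_of_mem fun t _ hdoor =>
        hlow (hdoor.mono (coe_subset.2 (erase_subset t A)) subset_rfl)
    rw [hempty, card_empty]
    exact iff_of_false (by decide) hfull

end OmittedLabel

namespace Kuhn

abbrev Simplex (d : ℕ) := (Fin d → ℕ) × Equiv.Perm (Fin d)

variable {d k : ℕ}

-- The simplex `(b, π)` of Kuhn's triangulation of `[0, k]ᵈ` has the vertices
-- `b + e_{π 0} + ⋯ + e_{π (t - 1)}`, `t = 0, …, d`, all in the unit cell at `b`.
def vertex (s : Simplex d) (t : ℕ) : Fin d → ℕ :=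
  fun j => s.1 j + if (s.2⁻¹ j : ℕ) < t then 1 else 0

def simplices (k d : ℕ) : Finset (Simplex d) :=
  Fintype.piFinset (fun _ => range k) ×ˢ univ

def IsDoor (κ : (Fin d → ℕ) → ℕ) (s : Simplex d) (t : ℕ) : Prop :=
  SurjOn (fun r => κ (vertex s r)) ((range (d + 1)).erase t : Finset ℕ) (range d : Finset ℕ)

def IsFullyLabelled (κ : (Fin d → ℕ) → ℕ) (s : Simplex d) : Prop :=
  SurjOn (fun r => κ (vertex s r)) (range (d + 1) : Finset ℕ) (range (d + 1) : Finset ℕ)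

-- The door `(s, t)` is the facet of `s` opposite its vertex `t`, so a facet shared by two
-- simplices gives two doors.
open scoped Classical in
noncomputable def doors (k d : ℕ) (κ : (Fin d → ℕ) → ℕ) : Finset (Simplex d × ℕ) :=
  {a ∈ simplices k d ×ˢ range (d + 1) | IsDoor κ a.1 a.2}

open scoped Classical in
noncomputable def fullyLabelled (k d : ℕ) (κ : (Fin d → ℕ) → ℕ) : Finset (Simplex d) :=
  {s ∈ simplices k d | IsFullyLabelled κ s}

lemma vertex_mem_cell (s : Simplex d) (t : ℕ) (j : Fin d) :
    s.1 j ≤ vertex s t j ∧ vertex s t j ≤ s.1 j + 1 := by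
  unfold vertex; split_ifs <;> omega

lemma mem_simplices {s : Simplex d} : s ∈ simplices k d ↔ ∀ j, s.1 j < k := by
  simp [simplices]

open scoped Classical in
theorem odd_card_doors_iff {κ : (Fin d → ℕ) → ℕ} (hκ : ∀ x, κ x ≤ d) :
    Odd #(doors k d κ) ↔ Odd #(fullyLabelled k d κ) := by
  have hfib : #(doors k d κ) = ∑ s ∈ simplices k d, #{t ∈ range (d + 1) | IsDoor κ s t} := by
    rw [doors, card_filter, sum_product]
    simp_rw [card_filter]
  rw [hfib, odd_sum_iff_odd_card_odd, fullyLabelled]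
  congr! 2
  refine filter_congr fun s _ => ?_
  -- the two filters use different, propositionally equal, `Decidable` instances
  convert odd_card_filter_surjOn_erase_iff (ℓ := fun r => κ (vertex s r)) (card_range _)
    fun r _ => mem_range.2 (Nat.lt_succ_of_le (hκ _)) <;> rfl

lemma mem_doors {κ : (Fin d → ℕ) → ℕ} {a : Simplex d × ℕ} :
    a ∈ doors k d κ ↔ a.1 ∈ simplices k d ∧ a.2 < d + 1 ∧ IsDoor κ a.1 a.2 := by
  simp [doors, and_assoc]

section Pivot

open Fin.NatCast

variable {κ : (Fin (d + 1) → ℕ) → ℕ}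

def rotateUp (s : Simplex (d + 1)) : Simplex (d + 1) :=
  (s.1 + Pi.single (s.2 0) 1, s.2 * finRotate (d + 1))

def rotateDown (s : Simplex (d + 1)) : Simplex (d + 1) :=
  (s.1 - Pi.single (s.2 (Fin.last d)) 1, s.2 * (finRotate (d + 1))⁻¹)

@[simp] lemma rotateUp_snd_last (s : Simplex (d + 1)) : (rotateUp s).2 (Fin.last d) = s.2 0 := by
  simp [rotateUp]

@[simp] lemma rotateDown_snd_zero (s : Simplex (d + 1)) :
    (rotateDown s).2 0 = s.2 (Fin.last d) := by
  rw [rotateDown, Equiv.Perm.mul_apply, finRotate_inv_zero]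

lemma rotateDown_rotateUp (s : Simplex (d + 1)) : rotateDown (rotateUp s) = s := by
  ext1
  · simp [rotateDown, rotateUp]
  · simp [rotateDown, rotateUp, mul_assoc]

lemma rotateUp_rotateDown {s : Simplex (d + 1)} (hs : 0 < s.1 (s.2 (Fin.last d))) :
    rotateUp (rotateDown s) = s := by
  ext1
  · show (rotateDown s).1 + Pi.single ((rotateDown s).2 0) 1 = s.1
    rw [rotateDown_snd_zero]
    funext j
    by_cases hj : j = s.2 (Fin.last d)
    · subst hj
      simp only [rotateDown, Pi.add_apply, Pi.sub_apply, Pi.single_eq_same]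
      omega
    · simp [rotateDown, hj]
  · simp [rotateDown, rotateUp, mul_assoc]

lemma vertex_rotateUp (s : Simplex (d + 1)) {r : ℕ} (hr : r ≤ d) :
    vertex (rotateUp s) r = vertex s (r + 1) := by
  funext j
  obtain ⟨i, rfl⟩ := s.2.surjective j
  simp only [vertex, rotateUp, Pi.add_apply, mul_inv_rev, Equiv.Perm.mul_apply]
  cases i using Fin.cases with
  | zero => simp [finRotate_inv_zero, Nat.not_lt.2 hr]
  | succ i => simp [finRotate_inv_succ]

lemma isDoor_rotateUp_iff (s : Simplex (d + 1)) :
    IsDoor κ (rotateUp s) (d + 1) ↔ IsDoor κ s 0 := by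
  simp only [IsDoor, SurjOn, Set.subset_def, coe_range, coe_erase, Set.mem_image,
    Set.mem_sdiff, Set.mem_Iio, Set.mem_singleton_iff]
  refine forall₂_congr fun m _ => ⟨?_, ?_⟩
  · rintro ⟨r, ⟨hr, hrd⟩, rfl⟩
    exact ⟨r + 1, ⟨by omega, by omega⟩, by rw [vertex_rotateUp s (by omega)]⟩
  · rintro ⟨r, ⟨hr, hr0⟩, rfl⟩
    refine ⟨r - 1, ⟨by omega, by omega⟩, ?_⟩
    rw [vertex_rotateUp s (by omega), Nat.sub_add_cancel (Nat.pos_of_ne_zero hr0)]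

def swapAt (s : Simplex (d + 1)) (t : ℕ) : Simplex (d + 1) :=
  (s.1, s.2 * Equiv.swap ((t - 1 : ℕ) : Fin (d + 1)) (t : Fin (d + 1)))

lemma swapAt_swapAt (s : Simplex (d + 1)) (t : ℕ) : swapAt (swapAt s t) t = s := by
  simp only [swapAt, mul_assoc, Equiv.swap_mul_self, mul_one]

lemma swapAt_ne {t : ℕ} (s : Simplex (d + 1)) (ht₀ : 0 < t) (ht : t < d + 1) :
    swapAt s t ≠ s := by
  intro h
  have := congrArg Prod.snd h
  simp only [swapAt, mul_eq_left, Equiv.swap_eq_one_iff, Fin.ext_iff, Fin.val_natCast] at this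
  rw [Nat.mod_eq_of_lt ht, Nat.mod_eq_of_lt (by omega)] at this
  omega

lemma vertex_swapAt {t r : ℕ} (s : Simplex (d + 1)) (ht₀ : 0 < t) (ht : t < d + 1) (hr : r ≠ t) :
    vertex (swapAt s t) r = vertex s r := by
  funext j
  simp only [vertex, swapAt, mul_inv_rev, Equiv.swap_inv, Equiv.Perm.mul_apply]
  congr 1
  generalize s.2⁻¹ j = i
  have ht₁ : ((↑(t - 1) : Fin (d + 1)) : ℕ) = t - 1 := by
    rw [Fin.val_natCast, Nat.mod_eq_of_lt (by omega)]
  have ht₂ : ((↑t : Fin (d + 1)) : ℕ) = t := by rw [Fin.val_natCast, Nat.mod_eq_of_lt ht]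
  rcases eq_or_ne i ↑(t - 1) with rfl | h₁
  · rw [Equiv.swap_apply_left, ht₁, ht₂]
    split_ifs <;> omega
  rcases eq_or_ne i ↑t with rfl | h₂
  · rw [Equiv.swap_apply_right, ht₁, ht₂]
    split_ifs <;> omega
  rw [Equiv.swap_apply_of_ne_of_ne h₁ h₂]

lemma IsDoor.swapAt {s : Simplex (d + 1)} {t : ℕ} (hdoor : IsDoor κ s t) (ht₀ : 0 < t)
    (ht : t < d + 1) : IsDoor κ (swapAt s t) t := by
  intro m hm
  obtain ⟨r, hr, rfl⟩ := hdoor hm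
  exact ⟨r, hr, congrArg κ (vertex_swapAt s ht₀ ht (ne_of_mem_erase hr))⟩

-- A door `(s, t)` not on the boundary is a facet of exactly one other simplex: the one swapping
-- `π (t - 1)` and `π t` if `0 < t < d + 1`, and the one obtained by cyclically rotating the
-- order of the coordinates and moving the base point along `π 0` (resp. back along `π d`) if
-- `t = 0` (resp. `t = d + 1`).
def pivot (a : Simplex (d + 1) × ℕ) : Simplex (d + 1) × ℕ :=
  if a.2 = 0 then (rotateUp a.1, d + 1)
  else if a.2 = d + 1 then (rotateDown a.1, 0)
  else (swapAt a.1 a.2, a.2)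

-- The facet opposite the last vertex lies in the hyperplane `x_{π d} = b_{π d}`. A door opposite
-- the first vertex never lies in a face `x_j = k` (`succ_lt_of_isDoor_zero`), so these are
-- the only doors on the boundary of the cube.
open scoped Classical in
noncomputable def boundaryDoors (k d : ℕ) (κ : (Fin (d + 1) → ℕ) → ℕ) :
    Finset (Simplex (d + 1) × ℕ) :=
  {a ∈ doors k (d + 1) κ | a.2 = d + 1 ∧ a.1.1 (a.1.2 (Fin.last d)) = 0}

lemma succ_lt_of_isDoor_zero (h1 : ∀ x (j : Fin (d + 1)), x j = k → κ x ≠ j)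
    {s : Simplex (d + 1)} (hs : s ∈ simplices k (d + 1)) (hdoor : IsDoor κ s 0) :
    s.1 (s.2 0) + 1 < k := by
  refine lt_of_le_of_ne (mem_simplices.1 hs _) fun hk => ?_
  obtain ⟨r, hr, hrκ⟩ := hdoor (mem_range.2 (s.2 0).isLt)
  refine h1 _ (s.2 0) ?_ hrκ
  have hr0 : r ≠ 0 := ne_of_mem_erase hr
  simp [vertex, Nat.pos_of_ne_zero hr0, hk]

lemma rotateUp_mem_simplices {s : Simplex (d + 1)} (hs : s ∈ simplices k (d + 1))
    (hlt : s.1 (s.2 0) + 1 < k) : rotateUp s ∈ simplices k (d + 1) := by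
  refine mem_simplices.2 fun j => ?_
  rcases eq_or_ne j (s.2 0) with rfl | hj
  · simpa [rotateUp] using hlt
  · simpa [rotateUp, hj] using mem_simplices.1 hs j

lemma rotateDown_mem_simplices {s : Simplex (d + 1)} (hs : s ∈ simplices k (d + 1)) :
    rotateDown s ∈ simplices k (d + 1) :=
  mem_simplices.2 fun j => (Nat.sub_le _ _).trans_lt (mem_simplices.1 hs j)

lemma pivot_mem (h1 : ∀ x (j : Fin (d + 1)), x j = k → κ x ≠ j)
    {a : Simplex (d + 1) × ℕ} (ha : a ∈ doors k (d + 1) κ \ boundaryDoors k d κ) :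
    pivot a ∈ doors k (d + 1) κ \ boundaryDoors k d κ := by
  obtain ⟨s, t⟩ := a
  simp only [mem_sdiff, boundaryDoors, mem_filter, mem_doors, not_and] at ha ⊢
  obtain ⟨⟨hs, ht, hdoor⟩, hint⟩ := ha
  unfold pivot
  split_ifs with h₀ hd <;> dsimp only at *
  · subst h₀
    refine ⟨⟨?_, by omega, (isDoor_rotateUp_iff s).2 hdoor⟩, fun _ _ => ?_⟩
    · exact rotateUp_mem_simplices hs (succ_lt_of_isDoor_zero h1 hs hdoor)
    · rw [rotateUp_snd_last]
      simp [rotateUp]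
  · subst hd
    have hpos : 0 < s.1 (s.2 (Fin.last d)) :=
      Nat.pos_of_ne_zero (hint ⟨hs, ht, hdoor⟩ rfl)
    refine ⟨⟨rotateDown_mem_simplices hs, by omega, ?_⟩, fun _ h => h.elim⟩
    rw [← isDoor_rotateUp_iff, rotateUp_rotateDown hpos]
    exact hdoor
  · exact ⟨⟨mem_simplices.2 fun j => mem_simplices.1 hs j, ht, hdoor.swapAt (by omega) (by omega)⟩,
      fun _ h => absurd h hd⟩

lemma pivot_pivot {a : Simplex (d + 1) × ℕ}
    (ha : a ∈ doors k (d + 1) κ \ boundaryDoors k d κ) : pivot (pivot a) = a := by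
  obtain ⟨s, t⟩ := a
  rcases eq_or_ne t 0 with rfl | h₀
  · simp [pivot, rotateDown_rotateUp]
  rcases eq_or_ne t (d + 1) with rfl | hd
  · simp only [mem_sdiff, boundaryDoors, mem_filter, not_and] at ha
    simp [pivot, rotateUp_rotateDown (Nat.pos_of_ne_zero (ha.2 ha.1 trivial))]
  · simp [pivot, h₀, hd, swapAt_swapAt]

lemma pivot_ne {a : Simplex (d + 1) × ℕ} (ha : a.2 < d + 2) : pivot a ≠ a := by
  obtain ⟨s, t⟩ := a
  unfold pivot
  split_ifs with h₀ hd <;> dsimp only at *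
  · simp [Prod.ext_iff, h₀]
  · simp [Prod.ext_iff, hd]
  · simpa [Prod.ext_iff] using swapAt_ne s (by omega) (by omega)

theorem even_card_doors_sdiff_boundaryDoors (h1 : ∀ x (j : Fin (d + 1)), x j = k → κ x ≠ j) :
    Even #(doors k (d + 1) κ \ boundaryDoors k d κ) :=
  even_card_of_involution pivot (fun _ => pivot_mem h1) (fun _ => pivot_pivot)
    fun _ ha => pivot_ne (mem_doors.1 (mem_sdiff.1 ha).1).2.1

end Pivot

section Boundary

def extendPerm (π : Equiv.Perm (Fin d)) : Equiv.Perm (Fin (d + 1)) where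
  toFun := Fin.lastCases (Fin.last d) fun i => (π i).castSucc
  invFun := Fin.lastCases (Fin.last d) fun i => (π⁻¹ i).castSucc
  left_inv i := by cases i using Fin.lastCases <;> simp
  right_inv i := by cases i using Fin.lastCases <;> simp

@[simp] lemma extendPerm_last (π : Equiv.Perm (Fin d)) :
    extendPerm π (Fin.last d) = Fin.last d := by
  simp [extendPerm]

@[simp] lemma extendPerm_castSucc (π : Equiv.Perm (Fin d)) (i : Fin d) :
    extendPerm π i.castSucc = (π i).castSucc := by
  simp [extendPerm]

@[simp] lemma extendPerm_inv (π : Equiv.Perm (Fin d)) : (extendPerm π)⁻¹ = extendPerm π⁻¹ := by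
  rw [inv_eq_iff_mul_eq_one]
  ext i
  cases i using Fin.lastCases <;> simp

lemma extendPerm_injective : Function.Injective (extendPerm (d := d)) := by
  intro π₁ π₂ h
  exact Equiv.ext fun i => by simpa using congrArg (fun π => π i.castSucc) h

lemma exists_extendPerm_eq {π : Equiv.Perm (Fin (d + 1))} (hπ : π (Fin.last d) = Fin.last d) :
    ∃ π' : Equiv.Perm (Fin d), extendPerm π' = π := by
  have hne {σ : Equiv.Perm (Fin (d + 1))} (hσ : σ (Fin.last d) = Fin.last d) (i : Fin d) :
      σ i.castSucc ≠ Fin.last d :=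
    fun h => Fin.castSucc_ne_last i (σ.injective (h.trans hσ.symm))
  have hπ' : π⁻¹ (Fin.last d) = Fin.last d := by rw [Equiv.Perm.inv_eq_iff_eq, hπ]
  refine ⟨⟨fun i => (π i.castSucc).castPred (hne hπ i),
    fun i => (π⁻¹ i.castSucc).castPred (hne hπ' i), fun i => ?_, fun i => ?_⟩, ?_⟩
  · simp
  · simp
  · ext i
    cases i using Fin.lastCases <;> simp [hπ]

lemma vertex_snoc (s : Simplex d) {r : ℕ} (hr : r ≤ d) :
    vertex (Fin.snoc s.1 0, extendPerm s.2) r = Fin.snoc (vertex s r) 0 := by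
  funext j
  cases j using Fin.lastCases with
  | last => simp [vertex, hr]
  | cast i => simp [vertex]

lemma snd_last_eq_last_of_isDoor {κ : (Fin (d + 1) → ℕ) → ℕ}
    (h0 : ∀ x (j : Fin (d + 1)), x j = 0 → κ x ≤ j) {s : Simplex (d + 1)}
    (hdoor : IsDoor κ s (d + 1)) (hs : s.1 (s.2 (Fin.last d)) = 0) :
    s.2 (Fin.last d) = Fin.last d := by
  obtain ⟨r, hr, hrκ⟩ := hdoor (mem_range.2 d.lt_succ_self)
  have hrd : r ≤ d := by have := mem_coe_range_erase.1 hr; omega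
  have hle := h0 (vertex s r) (s.2 (Fin.last d)) (by simp [vertex, hs, hrd])
  dsimp only at hrκ
  rw [hrκ] at hle
  exact Fin.ext (le_antisymm (Fin.is_le _) hle)

theorem card_boundaryDoors {κ : (Fin (d + 1) → ℕ) → ℕ} (hk : 0 < k)
    (h0 : ∀ x (j : Fin (d + 1)), x j = 0 → κ x ≤ j) :
    #(boundaryDoors k d κ) = #(fullyLabelled k d fun y => κ (Fin.snoc y 0)) := by
  symm
  refine card_bij (fun s _ => ((Fin.snoc s.1 0, extendPerm s.2), d + 1)) ?_ ?_ ?_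
  · rintro ⟨b, π⟩ hs
    simp only [fullyLabelled, mem_filter, mem_simplices] at hs
    obtain ⟨hb, hfull⟩ := hs
    simp only [boundaryDoors, mem_filter, mem_doors, mem_simplices]
    refine ⟨⟨fun j => ?_, by omega, fun m hm => ?_⟩, trivial, by simp⟩
    · cases j using Fin.lastCases <;> simp [hb, hk]
    · obtain ⟨r, hr, hrm⟩ := hfull hm
      have hrd : r ≤ d := Nat.le_of_lt_succ (mem_range.1 hr)
      exact ⟨r, mem_coe_range_erase.2 ⟨by omega, by omega⟩,
        (congrArg κ (vertex_snoc (b, π) hrd)).trans hrm⟩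
  · rintro ⟨b₁, π₁⟩ - ⟨b₂, π₂⟩ - h
    simp only [Prod.mk.injEq, Fin.snoc_inj, and_true] at h
    rw [h.1, extendPerm_injective h.2]
  · rintro ⟨⟨b, π⟩, t⟩ ha
    simp only [boundaryDoors, mem_filter, mem_doors, mem_simplices] at ha
    obtain ⟨⟨hb, -, hdoor⟩, rfl, hb0⟩ := ha
    have hπ := snd_last_eq_last_of_isDoor h0 hdoor hb0
    obtain ⟨π', rfl⟩ := exists_extendPerm_eq hπ
    have hsnoc : Fin.snoc (Fin.init b) 0 = b := by
      rw [← hb0, hπ, Fin.snoc_init_self]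
    refine ⟨(Fin.init b, π'), ?_, by simp [hsnoc]⟩
    simp only [fullyLabelled, mem_filter, mem_simplices]
    refine ⟨fun j => hb _, fun m hm => ?_⟩
    obtain ⟨r, hr, hrm⟩ := hdoor hm
    have hrd : r ≤ d := by have := mem_coe_range_erase.1 hr; omega
    refine ⟨r, mem_range.2 (Nat.lt_succ_of_le hrd), ?_⟩
    show κ (Fin.snoc (vertex (Fin.init b, π') r) 0) = m
    rwa [← vertex_snoc (Fin.init b, π') hrd, hsnoc]

end Boundary

structure IsSpernerLabelling (k d : ℕ) (κ : (Fin d → ℕ) → ℕ) : Prop where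
  le_dim : ∀ x, κ x ≤ d
  le_of_eq_zero : ∀ x (j : Fin d), x j = 0 → κ x ≤ j
  ne_of_eq_top : ∀ x (j : Fin d), x j = k → κ x ≠ j

lemma IsSpernerLabelling.snoc_zero {κ : (Fin (d + 1) → ℕ) → ℕ}
    (h : IsSpernerLabelling k (d + 1) κ) : IsSpernerLabelling k d fun y => κ (Fin.snoc y 0) where
  le_dim y := by simpa using h.le_of_eq_zero (Fin.snoc y 0) (Fin.last d) (by simp)
  le_of_eq_zero y j hy := by
    simpa using h.le_of_eq_zero (Fin.snoc y 0) j.castSucc (by simpa using hy)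
  ne_of_eq_top y j hy := by
    simpa using h.ne_of_eq_top (Fin.snoc y 0) j.castSucc (by simpa using hy)

open scoped Classical in
theorem odd_card_fullyLabelled (hk : 0 < k) :
    ∀ {d : ℕ} {κ : (Fin d → ℕ) → ℕ}, IsSpernerLabelling k d κ → Odd #(fullyLabelled k d κ)
  | 0, κ, h => by
    have hall : ∀ s ∈ simplices k 0, IsFullyLabelled κ s := fun s _ m hm => by
      have := h.le_dim (vertex s 0)
      simp only [coe_range, Set.mem_Iio] at hm
      exact ⟨0, by simp, by simp only; omega⟩
    rw [fullyLabelled, filter_true_of_mem hall]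
    simp [simplices]
  | d + 1, κ, h => by
    rw [← odd_card_doors_iff h.le_dim, ← card_sdiff_add_card_eq_card
      (show boundaryDoors k d κ ⊆ doors k (d + 1) κ from filter_subset _ _),
      card_boundaryDoors hk h.le_of_eq_zero]
    exact (even_card_doors_sdiff_boundaryDoors h.ne_of_eq_top).add_odd
      (odd_card_fullyLabelled hk h.snoc_zero)

theorem exists_mem_fullyLabelled {κ : (Fin d → ℕ) → ℕ} (hk : 0 < k) (h : IsSpernerLabelling k d κ) :
    (fullyLabelled k d κ).Nonempty :=
  card_pos.1 (odd_card_fullyLabelled hk h).pos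

end Kuhn

section Lebesgue

theorem exists_pos_ncard_ball_inter_le {E ι : Type*} [PseudoMetricSpace E] [Finite ι]
    {X : ι → Set E} (hX : ∀ i, IsClosed (X i)) {K : Set E} (hK : IsCompact K) {n : ℕ}
    (hmult : ∀ x ∈ K, {i | x ∈ X i}.ncard ≤ n) :
    ∃ δ > 0, ∀ a ∈ K, {i | (Metric.ball a δ ∩ X i).Nonempty}.ncard ≤ n := by
  obtain ⟨δ, hδ, hball⟩ := lebesgue_number_lemma_of_metric
    (c := fun x : K => ⋂ (i) (_ : (x : E) ∉ X i), (X i)ᶜ) hK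
    (fun _ => isOpen_iInter_of_finite fun i => isOpen_iInter_of_finite fun _ =>
      (hX i).isOpen_compl)
    (fun x hx => Set.mem_iUnion.2 ⟨⟨x, hx⟩, Set.mem_iInter₂.2 fun _ hi => hi⟩)
  refine ⟨δ, hδ, fun a ha => ?_⟩
  obtain ⟨x, hx⟩ := hball a ha
  refine (Set.ncard_le_ncard ?_ (Set.toFinite _)).trans (hmult x x.2)
  rintro i ⟨y, hy, hyi⟩
  by_contra hxi
  exact Set.mem_iInter₂.1 (hx hy) i hxi hyi

variable {n : ℕ}

-- Clamping puts every `y : Fin n → ℕ` into the cube, so labels can be defined on all of `ℕⁿ`.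
noncomputable def cubeGridPoint (k : ℕ) (y : Fin n → ℕ) : Fin n → ℝ :=
  fun j => (min (y j) k : ℕ) / k

lemma cubeGridPoint_mem_Icc (k : ℕ) (y : Fin n → ℕ) : cubeGridPoint k y ∈ Set.Icc 0 1 :=
  ⟨fun j => by unfold cubeGridPoint; positivity,
    fun j => div_le_one_of_le₀ (Nat.cast_le.2 (min_le_right _ _)) k.cast_nonneg⟩

lemma cubeGridPoint_eq_zero {k : ℕ} {y : Fin n → ℕ} {j : Fin n} (hy : y j = 0) :
    cubeGridPoint k y j = 0 := by
  simp [cubeGridPoint, hy]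

lemma cubeGridPoint_eq_one {k : ℕ} (hk : 0 < k) {y : Fin n → ℕ} {j : Fin n} (hy : y j = k) :
    cubeGridPoint k y j = 1 := by
  simp [cubeGridPoint, hy, hk.ne']

lemma dist_cubeGridPoint_le {k : ℕ} {b y : Fin n → ℕ} (hb : ∀ j, b j < k)
    (hy : ∀ j, b j ≤ y j ∧ y j ≤ b j + 1) :
    dist (cubeGridPoint k y) (cubeGridPoint k b) ≤ 1 / k := by
  refine (dist_pi_le_iff (by positivity)).2 fun j => ?_
  have hyk : y j ≤ k := (hy j).2.trans (hb j)
  simp only [cubeGridPoint, min_eq_left hyk, min_eq_left (hb j).le, Real.dist_eq, ← sub_div,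
    abs_div, Nat.abs_cast]
  gcongr
  have hby : (b j : ℝ) ≤ y j := by exact_mod_cast (hy j).1
  have hyb : (y j : ℝ) ≤ b j + 1 := by exact_mod_cast (hy j).2
  exact abs_le.2 ⟨by linarith, by linarith⟩

noncomputable def firstZeroFacet (S : Set (Fin n → ℝ)) : ℕ :=
  sInf (insert n {m | ∃ j : Fin n, (j : ℕ) = m ∧ ∃ x ∈ S, x j = 0})

lemma firstZeroFacet_le_dim (S : Set (Fin n → ℝ)) : firstZeroFacet S ≤ n :=
  Nat.sInf_le (Set.mem_insert _ _)

lemma firstZeroFacet_le {S : Set (Fin n → ℝ)} {j : Fin n} {x : Fin n → ℝ} (hx : x ∈ S)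
    (hxj : x j = 0) : firstZeroFacet S ≤ j :=
  Nat.sInf_le (Set.mem_insert_of_mem _ ⟨j, rfl, x, hx, hxj⟩)

lemma exists_mem_eq_zero_of_firstZeroFacet_eq {S : Set (Fin n → ℝ)} {j : Fin n}
    (h : firstZeroFacet S = j) : ∃ x ∈ S, x j = 0 := by
  have hmem := Nat.sInf_mem
    (Set.insert_nonempty n {m | ∃ j : Fin n, (j : ℕ) = m ∧ ∃ x ∈ S, x j = 0})
  rw [← firstZeroFacet, h] at hmem
  rcases hmem with hn | ⟨j', hj', hx⟩
  · exact absurd hn j.isLt.ne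
  · rwa [Fin.ext hj'] at hx

theorem exists_gridPoint_near_n_add_one_sets {ι : Type*} {X : ι → Set (Fin n → ℝ)}
    (hcover : Set.Icc (0 : Fin n → ℝ) 1 ⊆ ⋃ i, X i)
    (hfacet : ∀ i j, (∃ x ∈ X i ∩ Set.Icc 0 1, x j = 0) → ∀ x ∈ X i ∩ Set.Icc 0 1, x j ≠ 1)
    {k : ℕ} (hk : 0 < k) :
    ∃ b : Fin n → ℕ, ∃ T : Finset ι, n + 1 ≤ #T ∧
      ∀ i ∈ T, ∃ x ∈ X i, dist x (cubeGridPoint k b) ≤ 1 / k := by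
  classical
  choose idx hidx using fun y : Fin n → ℕ => Set.mem_iUnion.1 (hcover (cubeGridPoint_mem_Icc k y))
  have hmem y : cubeGridPoint k y ∈ X (idx y) ∩ Set.Icc 0 1 := ⟨hidx y, cubeGridPoint_mem_Icc k y⟩
  set c : ι → ℕ := fun i => firstZeroFacet (X i ∩ Set.Icc 0 1)
  obtain ⟨s, hs⟩ := Kuhn.exists_mem_fullyLabelled (κ := fun y => c (idx y)) hk
    { le_dim := fun y => firstZeroFacet_le_dim _
      le_of_eq_zero := fun y j hy => firstZeroFacet_le (hmem y) (cubeGridPoint_eq_zero hy)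
      ne_of_eq_top := fun y j hy hc => hfacet _ j (exists_mem_eq_zero_of_firstZeroFacet_eq hc) _
        (hmem y) (cubeGridPoint_eq_one hk hy) }
  simp only [Kuhn.fullyLabelled, mem_filter, Kuhn.mem_simplices] at hs
  obtain ⟨hb, hfull⟩ := hs
  refine ⟨s.1, (range (n + 1)).image fun r => idx (Kuhn.vertex s r), ?_, fun i hi => ?_⟩
  · calc n + 1 = #(range (n + 1)) := (card_range _).symm
      _ ≤ _ := card_le_card_of_surjOn c fun m hm => ?_
    obtain ⟨r, hr, hrm⟩ := hfull hm
    exact ⟨_, mem_image_of_mem _ hr, hrm⟩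
  · obtain ⟨r, -, rfl⟩ := mem_image.1 hi
    exact ⟨_, hidx _, dist_cubeGridPoint_le hb (Kuhn.vertex_mem_cell s r)⟩

end Lebesgue

/-- **Lebesgue's covering theorem.**
If the unit cube `[0,1]^n` is covered by closed sets with covering multiplicity
at most `n`, then one of the sets intersects two opposite facets of the cube. -/
theorem stmt7 (n N : ℕ) (X : Fin N → Set (Fin n → ℝ))
    (hclosed : ∀ i, IsClosed (X i))
    (hcover : Set.Icc (0 : Fin n → ℝ) 1 ⊆ ⋃ i, X i)
    (hmult : ∀ x ∈ Set.Icc (0 : Fin n → ℝ) 1, Set.ncard {i | x ∈ X i} ≤ n) :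
    ∃ (i : Fin N) (j : Fin n),
      (∃ x ∈ X i ∩ Set.Icc (0 : Fin n → ℝ) 1, x j = 0) ∧
      (∃ x ∈ X i ∩ Set.Icc (0 : Fin n → ℝ) 1, x j = 1) := by
  by_contra hfacet
  push Not at hfacet
  obtain ⟨δ, hδ, hball⟩ := exists_pos_ncard_ball_inter_le hclosed isCompact_Icc hmult
  obtain ⟨k, hk⟩ := exists_nat_one_div_lt hδ
  obtain ⟨b, T, hT, hTX⟩ := exists_gridPoint_near_n_add_one_sets hcover hfacet k.succ_pos
  have hTball : (T : Set (Fin N)) ⊆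
      {i | (Metric.ball (cubeGridPoint (k + 1) b) δ ∩ X i).Nonempty} := fun i hi => by
    obtain ⟨x, hx, hxb⟩ := hTX i hi
    exact ⟨x, Metric.mem_ball.2 (hxb.trans_lt (by exact_mod_cast hk)), hx⟩
  have hcard := (Set.ncard_le_ncard hTball (Set.toFinite _)).trans
    (hball _ (cubeGridPoint_mem_Icc _ b))
  rw [Set.ncard_coe_finset] at hcard
  omega
end

section
/- The 2-dimensional Hex-type theorem: if the square $[0,1]^2$ is covered by two closed sets $X_1, X_2$, then either a connected component of $X_1$ meets both $\{x_1 = 0\}$ and $\{x_1 = 1\}$, or a connected component of $X_2$ meets both $\{x_2 = 0\}$ and $\{x_2 = 1\}$. -/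
open Set

section HexAux

def hexT (a b : ZMod 4) : ℤ := if b - a = 1 then 1 else if b - a = 3 then -1 else 0
lemma hexT_anti : ∀ a b : ZMod 4, hexT a b = - hexT b a := by decide
lemma hexT_cell : ∀ a b c d : ZMod 4, b - a ≠ 2 → c - b ≠ 2 → d - c ≠ 2 →
    a - d ≠ 2 → c - a ≠ 2 → d - b ≠ 2 →
    hexT a b + hexT b c + hexT c d + hexT d a = 0 := by decide
def hexP (e x : ZMod 4) : ℤ := ((x - e - 1).val : ℤ)
lemma hexT_side : ∀ e a b : ZMod 4, a ≠ e → b ≠ e → b - a ≠ 2 →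
    hexT a b = hexP e b - hexP e a := by decide
lemma corner1 : ∀ a : ZMod 4, a ≠ 3 → a ≠ 0 → hexP 0 a - hexP 3 a = -1 := by decide
lemma corner2 : ∀ a : ZMod 4, a ≠ 0 → a ≠ 1 → hexP 0 a - hexP 1 a = 1 := by decide
lemma corner3 : ∀ a : ZMod 4, a ≠ 1 → a ≠ 2 → hexP 1 a - hexP 2 a = 1 := by decide
lemma corner4 : ∀ a : ZMod 4, a ≠ 2 → a ≠ 3 → hexP 2 a - hexP 3 a = 1 := by decide

/-- The discrete 2-dimensional Hex / Steinhaus lemma. -/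
lemma hex_discrete (n : ℕ) (hn : 1 ≤ n) (l : ℕ → ℕ → ZMod 4)
    (hadj : ∀ i j i' j', i ≤ n → j ≤ n → i' ≤ n → j' ≤ n →
      i' ≤ i + 1 → i ≤ i' + 1 → j' ≤ j + 1 → j ≤ j' + 1 → l i' j' - l i j ≠ 2)
    (hL : ∀ j, j ≤ n → l 0 j ≠ 2) (hR : ∀ j, j ≤ n → l n j ≠ 0)
    (hB : ∀ i, i ≤ n → l i 0 ≠ 3) (hT : ∀ i, i ≤ n → l i n ≠ 1) : False := by
  set h : ℕ → ℕ → ℤ := fun i j => hexT (l i j) (l (i+1) j) with hh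
  set v : ℕ → ℕ → ℤ := fun i j => hexT (l i j) (l i (j+1)) with hv
  -- each cell has zero turning
  have hcell : ∀ i ∈ Finset.range n, ∀ j ∈ Finset.range n,
      (h i j - h i (j+1)) + (v (i+1) j - v i j) = 0 := by
    intro i hi j hj
    rw [Finset.mem_range] at hi hj
    have adj : ∀ i₁ j₁ i₂ j₂, i₁ ≤ n → j₁ ≤ n → i₂ ≤ n → j₂ ≤ n →
        i₂ ≤ i₁ + 1 → i₁ ≤ i₂ + 1 → j₂ ≤ j₁ + 1 → j₁ ≤ j₂ + 1 →
        l i₂ j₂ - l i₁ j₁ ≠ 2 := hadj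
    have hc := hexT_cell (l i j) (l (i+1) j) (l (i+1) (j+1)) (l i (j+1))
      (adj i j (i+1) j (by omega) (by omega) (by omega) (by omega) (by omega) (by omega) (by omega) (by omega))
      (adj (i+1) j (i+1) (j+1) (by omega) (by omega) (by omega) (by omega) (by omega) (by omega) (by omega) (by omega))
      (adj (i+1) (j+1) i (j+1) (by omega) (by omega) (by omega) (by omega) (by omega) (by omega) (by omega) (by omega))
      (adj i (j+1) i j (by omega) (by omega) (by omega) (by omega) (by omega) (by omega) (by omega) (by omega))
      (adj i j (i+1) (j+1) (by omega) (by omega) (by omega) (by omega) (by omega) (by omega) (by omega) (by omega))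
      (adj (i+1) j i (j+1) (by omega) (by omega) (by omega) (by omega) (by omega) (by omega) (by omega) (by omega))
    have e1 : hexT (l (i+1) (j+1)) (l i (j+1)) = - h i (j+1) := by
      rw [hh]; exact hexT_anti _ _
    have e2 : hexT (l i (j+1)) (l i j) = - v i j := by
      rw [hv]; exact hexT_anti _ _
    simp only [hh, hv] at *
    omega
  -- total turning is zero
  have htot : (∑ i ∈ Finset.range n, (h i 0 - h i n))
      + (∑ j ∈ Finset.range n, (v n j - v 0 j)) = 0 := by
    have e1 : ∀ i, ∑ j ∈ Finset.range n, (h i j - h i (j+1)) = h i 0 - h i n := by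
      intro i; exact Finset.sum_range_sub' (fun j => h i j) n
    have e2 : ∀ j, ∑ i ∈ Finset.range n, (v (i+1) j - v i j) = v n j - v 0 j := by
      intro j; exact Finset.sum_range_sub (fun i => v i j) n
    calc (∑ i ∈ Finset.range n, (h i 0 - h i n)) + (∑ j ∈ Finset.range n, (v n j - v 0 j))
        = (∑ i ∈ Finset.range n, ∑ j ∈ Finset.range n, (h i j - h i (j+1)))
          + (∑ j ∈ Finset.range n, ∑ i ∈ Finset.range n, (v (i+1) j - v i j)) := by
          rw [Finset.sum_congr rfl (fun i _ => (e1 i).symm),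
            Finset.sum_congr rfl (fun j _ => (e2 j).symm)]
      _ = ∑ i ∈ Finset.range n, ∑ j ∈ Finset.range n,
            ((h i j - h i (j+1)) + (v (i+1) j - v i j)) := by
          rw [Finset.sum_comm (s := Finset.range n) (t := Finset.range n)
            (f := fun j i => (v (i+1) j - v i j))]
          rw [← Finset.sum_add_distrib]
          exact Finset.sum_congr rfl fun i _ => (Finset.sum_add_distrib).symm
      _ = 0 := by
          rw [Finset.sum_congr rfl (fun i hi => Finset.sum_congr rfl (fun j hj => hcell i hi j hj))]
          simp
  -- evaluate the four boundary sums via potentials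
  have sB : ∑ i ∈ Finset.range n, h i 0 = hexP 3 (l n 0) - hexP 3 (l 0 0) := by
    have : ∀ i ∈ Finset.range n, h i 0
        = (fun i => hexP 3 (l i 0)) (i+1) - (fun i => hexP 3 (l i 0)) i := by
      intro i hi; rw [Finset.mem_range] at hi
      exact hexT_side 3 _ _ (hB i (by omega)) (hB (i+1) (by omega))
        (hadj i 0 (i+1) 0 (by omega) (by omega) (by omega) (by omega) (by omega) (by omega) (by omega) (by omega))
    rw [Finset.sum_congr rfl this, Finset.sum_range_sub (fun i => hexP 3 (l i 0)) n]
  have sT : ∑ i ∈ Finset.range n, h i n = hexP 1 (l n n) - hexP 1 (l 0 n) := by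
    have : ∀ i ∈ Finset.range n, h i n
        = (fun i => hexP 1 (l i n)) (i+1) - (fun i => hexP 1 (l i n)) i := by
      intro i hi; rw [Finset.mem_range] at hi
      exact hexT_side 1 _ _ (hT i (by omega)) (hT (i+1) (by omega))
        (hadj i n (i+1) n (by omega) (by omega) (by omega) (by omega) (by omega) (by omega) (by omega) (by omega))
    rw [Finset.sum_congr rfl this, Finset.sum_range_sub (fun i => hexP 1 (l i n)) n]
  have sR : ∑ j ∈ Finset.range n, v n j = hexP 0 (l n n) - hexP 0 (l n 0) := by
    have : ∀ j ∈ Finset.range n, v n j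
        = (fun j => hexP 0 (l n j)) (j+1) - (fun j => hexP 0 (l n j)) j := by
      intro j hj; rw [Finset.mem_range] at hj
      exact hexT_side 0 _ _ (hR j (by omega)) (hR (j+1) (by omega))
        (hadj n j n (j+1) (by omega) (by omega) (by omega) (by omega) (by omega) (by omega) (by omega) (by omega))
    rw [Finset.sum_congr rfl this, Finset.sum_range_sub (fun j => hexP 0 (l n j)) n]
  have sL : ∑ j ∈ Finset.range n, v 0 j = hexP 2 (l 0 n) - hexP 2 (l 0 0) := by
    have : ∀ j ∈ Finset.range n, v 0 j
        = (fun j => hexP 2 (l 0 j)) (j+1) - (fun j => hexP 2 (l 0 j)) j := by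
      intro j hj; rw [Finset.mem_range] at hj
      exact hexT_side 2 _ _ (hL j (by omega)) (hL (j+1) (by omega))
        (hadj 0 j 0 (j+1) (by omega) (by omega) (by omega) (by omega) (by omega) (by omega) (by omega) (by omega))
    rw [Finset.sum_congr rfl this, Finset.sum_range_sub (fun j => hexP 2 (l 0 j)) n]
  rw [Finset.sum_sub_distrib, Finset.sum_sub_distrib, sB, sT, sR, sL] at htot
  have c1 := corner1 (l n 0) (hB n le_rfl) (hR 0 (by omega))
  have c2 := corner2 (l n n) (hR n le_rfl) (hT n le_rfl)
  have c3 := corner3 (l 0 n) (hT 0 (by omega)) (hL n le_rfl)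
  have c4 := corner4 (l 0 0) (hL 0 (by omega)) (hB 0 (by omega))
  omega


lemma exists_isClopen_sep {Y : Type*} [TopologicalSpace Y] [CompactSpace Y] [T2Space Y]
    (a : Y) (K : Set Y) (hK : IsClosed K) (hdisj : Disjoint (connectedComponent a) K) :
    ∃ U : Set Y, IsClopen U ∧ a ∈ U ∧ Disjoint U K := by
  have hcc := connectedComponent_eq_iInter_isClopen a
  have hcov : K ⊆ ⋃ s : {s : Set Y // IsClopen s ∧ a ∈ s}, (s : Set Y)ᶜ := by
    intro x hx
    by_contra hmem
    simp only [mem_iUnion, mem_compl_iff, not_exists, not_not] at hmem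
    have : x ∈ connectedComponent a := by
      rw [hcc, mem_iInter]; exact fun s => hmem s
    exact disjoint_left.mp hdisj this hx
  obtain ⟨t, ht⟩ := (hK.isCompact).elim_finite_subcover
    (fun s : {s : Set Y // IsClopen s ∧ a ∈ s} => (s : Set Y)ᶜ)
    (fun s => s.2.1.compl.isOpen) hcov
  refine ⟨⋂ s ∈ t, (s : Set Y), isClopen_biInter_finset (fun s _ => s.2.1),
    mem_iInter₂.mpr fun s _ => s.2.2, ?_⟩
  rw [disjoint_left]
  intro x hx hxK
  obtain ⟨s, hs, hxs⟩ := by simpa only [mem_iUnion, mem_compl_iff] using ht hxK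
  exact hxs (mem_iInter₂.mp hx s hs)

lemma hex_sep {E : Type*} [TopologicalSpace E] [T2Space E] {X A B : Set E}
    (hX : IsCompact X) (hA : IsClosed A) (hB : IsClosed B)
    (h : ¬ ∃ z ∈ X, (connectedComponentIn X z ∩ A).Nonempty ∧
      (connectedComponentIn X z ∩ B).Nonempty) :
    ∃ F G : Set E, IsClosed F ∧ IsClosed G ∧ Disjoint F G ∧ F ∪ G = X ∧
      X ∩ A ⊆ F ∧ X ∩ B ⊆ G := by
  haveI : CompactSpace X := isCompact_iff_compactSpace.mp hX
  set K : Set X := Subtype.val ⁻¹' B with hKdef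
  have hKcl : IsClosed K := hB.preimage continuous_subtype_val
  have step : ∀ a : X, (a : E) ∈ A → ∃ U : Set X, IsClopen U ∧ a ∈ U ∧ Disjoint U K := by
    intro a haA
    apply exists_isClopen_sep a K hKcl
    rw [disjoint_left]
    intro x hx hxK
    have himg : connectedComponentIn X (a : E) = Subtype.val '' connectedComponent a :=
      connectedComponentIn_eq_image a.2
    have hne1 : (connectedComponentIn X (a : E) ∩ A).Nonempty :=
      ⟨a, mem_connectedComponentIn a.2, haA⟩
    have hne2 : (connectedComponentIn X (a : E) ∩ B).Nonempty := by
      refine ⟨x, ?_, hxK⟩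
      rw [himg]; exact ⟨x, hx, rfl⟩
    exact h ⟨a, a.2, hne1, hne2⟩
  set A' : Set X := Subtype.val ⁻¹' A with hA'def
  choose! U hUclopen hUmem hUdisj using step
  have hcovA : A' ⊆ ⋃ a : {a : X // (a : E) ∈ A}, U a := fun x hx =>
    mem_iUnion.mpr ⟨⟨x, hx⟩, hUmem x hx⟩
  have hA'cp : IsCompact A' := (hA.preimage continuous_subtype_val).isCompact
  obtain ⟨t, ht⟩ := hA'cp.elim_finite_subcover
    (fun a : {a : X // (a : E) ∈ A} => U a) (fun a => (hUclopen a a.2).isOpen) hcovA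
  set V : Set X := ⋃ a ∈ t, U a with hVdef
  have hVclopen : IsClopen V := by
    apply Set.Finite.isClopen_biUnion t.finite_toSet
    exact fun a _ => hUclopen a a.2
  have hVK : Disjoint V K := by
    rw [disjoint_left]
    intro x hx hxK
    rw [hVdef, mem_iUnion₂] at hx
    obtain ⟨a, ha, hxa⟩ := hx
    exact disjoint_left.mp (hUdisj a a.2) hxa hxK
  refine ⟨Subtype.val '' V, Subtype.val '' Vᶜ, ?_, ?_, ?_, ?_, ?_, ?_⟩
  · exact (hVclopen.isClosed.isCompact.image continuous_subtype_val).isClosed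
  · exact (hVclopen.compl.isClosed.isCompact.image continuous_subtype_val).isClosed
  · rw [disjoint_left]
    rintro x ⟨y, hy, rfl⟩ ⟨z, hz, hzy⟩
    rw [Subtype.val_injective hzy] at hz
    exact hz hy
  · rw [← image_union, union_compl_self, image_univ, Subtype.range_val]
  · rintro x ⟨hxX, hxA⟩
    exact ⟨⟨x, hxX⟩, ht hxA, rfl⟩
  · rintro x ⟨hxX, hxB⟩
    refine ⟨⟨x, hxX⟩, ?_, rfl⟩
    exact fun hV => disjoint_left.mp hVK hV hxB

/-- disjoint compact sets are at positive distance -/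
lemma hex_dist {E : Type*} [MetricSpace E] {F G : Set E} (hF : IsCompact F)
    (hG : IsClosed G) (hd : Disjoint F G) :
    ∃ δ > 0, ∀ x ∈ F, ∀ y ∈ G, δ ≤ dist x y := by
  obtain ⟨δ, hδ, hdisj⟩ := hd.exists_thickenings hF hG
  refine ⟨δ, hδ, fun x hx y hy => ?_⟩
  by_contra hlt
  push_neg at hlt
  have h1 : y ∈ Metric.thickening δ F := Metric.mem_thickening_iff.mpr ⟨x, hx, by
    rwa [dist_comm]⟩
  have h2 : y ∈ Metric.thickening δ G := Metric.self_subset_thickening hδ G hy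
  exact disjoint_left.mp hdisj h1 h2

end HexAux

/-- **The 2-dimensional Hex-type theorem.**
If the unit square `[0,1]²` is covered by two closed sets `X₁, X₂`, then either
a connected component of `X₁` meets both vertical sides `{x₁ = 0}` and
`{x₁ = 1}`, or a connected component of `X₂` meets both horizontal sides
`{x₂ = 0}` and `{x₂ = 1}`. -/
theorem stmt10 (X₁ X₂ : Set (Fin 2 → ℝ))
    (hclosed₁ : IsClosed X₁) (hclosed₂ : IsClosed X₂)
    (hsub₁ : X₁ ⊆ Set.Icc (0 : Fin 2 → ℝ) 1) (hsub₂ : X₂ ⊆ Set.Icc (0 : Fin 2 → ℝ) 1)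
    (hcover : Set.Icc (0 : Fin 2 → ℝ) 1 ⊆ X₁ ∪ X₂) :
    (∃ z ∈ X₁, (connectedComponentIn X₁ z ∩ {x | x 0 = 0}).Nonempty ∧
        (connectedComponentIn X₁ z ∩ {x | x 0 = 1}).Nonempty) ∨
    (∃ z ∈ X₂, (connectedComponentIn X₂ z ∩ {x | x 1 = 0}).Nonempty ∧
        (connectedComponentIn X₂ z ∩ {x | x 1 = 1}).Nonempty) := by
  classical
  by_contra hcon
  rw [not_or] at hcon
  obtain ⟨h1, h2⟩ := hcon
  have hQc : IsCompact (Set.Icc (0 : Fin 2 → ℝ) 1) := isCompact_Icc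
  have hX₁c : IsCompact X₁ := hQc.of_isClosed_subset hclosed₁ hsub₁
  have hX₂c : IsCompact X₂ := hQc.of_isClosed_subset hclosed₂ hsub₂
  have hcl0 : ∀ k : Fin 2, ∀ c : ℝ, IsClosed {x : Fin 2 → ℝ | x k = c} :=
    fun k c => isClosed_eq (continuous_apply k) continuous_const
  obtain ⟨F₁, G₁, hF₁cl, hG₁cl, hd₁, hu₁, hA₁, hB₁⟩ :=
    hex_sep hX₁c (hcl0 0 0) (hcl0 0 1) h1
  obtain ⟨F₂, G₂, hF₂cl, hG₂cl, hd₂, hu₂, hA₂, hB₂⟩ :=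
    hex_sep hX₂c (hcl0 1 0) (hcl0 1 1) h2
  have hF₁c : IsCompact F₁ := hX₁c.of_isClosed_subset hF₁cl (hu₁ ▸ subset_union_left)
  have hF₂c : IsCompact F₂ := hX₂c.of_isClosed_subset hF₂cl (hu₂ ▸ subset_union_left)
  obtain ⟨δ₁, hδ₁, hdist₁⟩ := hex_dist hF₁c hG₁cl hd₁
  obtain ⟨δ₂, hδ₂, hdist₂⟩ := hex_dist hF₂c hG₂cl hd₂
  set δ : ℝ := min δ₁ δ₂ with hδdef
  have hδ : 0 < δ := lt_min hδ₁ hδ₂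
  obtain ⟨n, hnδ⟩ := exists_nat_gt (1 / δ)
  have hn0 : 0 < (n : ℝ) := lt_trans (by positivity) hnδ
  have hn1 : 1 ≤ n := by exact_mod_cast hn0
  have hstep : (1 : ℝ) / n < δ := by
    have h1' := (div_lt_iff₀ hδ).mp hnδ
    rw [div_lt_iff₀ hn0, mul_comm]
    exact h1'
  -- the grid
  set g : ℕ → ℕ → (Fin 2 → ℝ) := fun i j k => if k = 0 then (i:ℝ)/n else (j:ℝ)/n with hg
  have hg0 : ∀ i j, g i j 0 = (i:ℝ)/n := fun i j => rfl
  have hgk : ∀ i j, ∀ k : Fin 2, k ≠ 0 → g i j k = (j:ℝ)/n := fun i j k hk => if_neg hk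
  have hg1 : ∀ i j, g i j 1 = (j:ℝ)/n := fun i j => hgk i j 1 (by decide)
  have hmem : ∀ i j, i ≤ n → j ≤ n → g i j ∈ Set.Icc (0 : Fin 2 → ℝ) 1 := by
    intro i j hi hj
    refine Set.mem_Icc.mpr ⟨fun k => ?_, fun k => ?_⟩
    · show (0:ℝ) ≤ g i j k
      by_cases hk : k = 0
      · subst hk; rw [hg0]; positivity
      · rw [hgk i j k hk]; positivity
    · show g i j k ≤ (1:ℝ)
      by_cases hk : k = 0
      · subst hk; rw [hg0, div_le_one hn0]; exact_mod_cast hi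
      · rw [hgk i j k hk, div_le_one hn0]; exact_mod_cast hj
  have key : ∀ a b : ℕ, a ≤ b + 1 → b ≤ a + 1 → |(a:ℝ) - (b:ℝ)| ≤ 1 := by
    intro a b hab hba
    have h1' : (a:ℝ) ≤ (b:ℝ) + 1 := by exact_mod_cast hab
    have h2' : (b:ℝ) ≤ (a:ℝ) + 1 := by exact_mod_cast hba
    rw [abs_le]; constructor <;> linarith
  have hdistg : ∀ i j i' j', i' ≤ i + 1 → i ≤ i' + 1 → j' ≤ j + 1 → j ≤ j' + 1 →
      dist (g i j) (g i' j') < δ := by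
    intro i j i' j' h1' h2' h3' h4'
    have hle : dist (g i j) (g i' j') ≤ 1/n := by
      rw [dist_pi_le_iff (by positivity)]
      intro k
      by_cases hk : k = 0
      · subst hk
        rw [hg0, hg0, Real.dist_eq, div_sub_div_same, abs_div, abs_of_nonneg hn0.le]
        gcongr
        exact key i i' h2' h1'
      · rw [hgk i j k hk, hgk i' j' k hk, Real.dist_eq, div_sub_div_same, abs_div,
          abs_of_nonneg hn0.le]
        gcongr
        exact key j j' h4' h3'
    linarith
  -- the labelling
  set l : ℕ → ℕ → ZMod 4 := fun i j =>
    if g i j ∈ F₁ then 0 else if g i j ∈ G₁ then 2 else if g i j ∈ F₂ then 1 else 3 with hl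
  have hlab : ∀ i j, i ≤ n → j ≤ n →
      (l i j = 0 ∧ g i j ∈ F₁) ∨ (l i j = 2 ∧ g i j ∈ G₁) ∨
      (l i j = 1 ∧ g i j ∈ F₂) ∨ (l i j = 3 ∧ g i j ∈ G₂) := by
    intro i j hi hj
    by_cases hF1 : g i j ∈ F₁
    · exact Or.inl ⟨by rw [hl]; simp only [if_pos hF1], hF1⟩
    by_cases hG1 : g i j ∈ G₁
    · exact Or.inr (Or.inl ⟨by rw [hl]; simp only [if_neg hF1, if_pos hG1], hG1⟩)
    by_cases hF2 : g i j ∈ F₂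
    · exact Or.inr (Or.inr (Or.inl
        ⟨by rw [hl]; simp only [if_neg hF1, if_neg hG1, if_pos hF2], hF2⟩))
    · refine Or.inr (Or.inr (Or.inr
        ⟨by rw [hl]; simp only [if_neg hF1, if_neg hG1, if_neg hF2], ?_⟩))
      have hin : g i j ∈ X₁ ∪ X₂ := hcover (hmem i j hi hj)
      rw [← hu₁, ← hu₂] at hin
      rcases hin with (h | h) | (h | h)
      · exact absurd h hF1
      · exact absurd h hG1
      · exact absurd h hF2
      · exact h
  have contra1 : ∀ p q : Fin 2 → ℝ, p ∈ F₁ → q ∈ G₁ → dist p q < δ → False :=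
    fun p q hp hq hlt =>
      absurd hlt (not_lt.mpr ((min_le_left δ₁ δ₂).trans (hdist₁ p hp q hq)))
  have contra2 : ∀ p q : Fin 2 → ℝ, p ∈ F₂ → q ∈ G₂ → dist p q < δ → False :=
    fun p q hp hq hlt =>
      absurd hlt (not_lt.mpr ((min_le_right δ₁ δ₂).trans (hdist₂ p hp q hq)))
  have hadj : ∀ i j i' j', i ≤ n → j ≤ n → i' ≤ n → j' ≤ n →
      i' ≤ i + 1 → i ≤ i' + 1 → j' ≤ j + 1 → j ≤ j' + 1 → l i' j' - l i j ≠ 2 := by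
    intro i j i' j' hi hj hi' hj' a1 a2 a3 a4 heq
    have hd := hdistg i j i' j' a1 a2 a3 a4
    have hd' := hdistg i' j' i j a2 a1 a4 a3
    rcases hlab i j hi hj with ⟨e1, m1⟩ | ⟨e1, m1⟩ | ⟨e1, m1⟩ | ⟨e1, m1⟩ <;>
      rcases hlab i' j' hi' hj' with ⟨e2, m2⟩ | ⟨e2, m2⟩ | ⟨e2, m2⟩ | ⟨e2, m2⟩ <;>
      rw [e1, e2] at heq
    · exact absurd heq (by decide)
    · exact contra1 _ _ m1 m2 hd
    · exact absurd heq (by decide)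
    · exact absurd heq (by decide)
    · exact contra1 _ _ m2 m1 hd'
    · exact absurd heq (by decide)
    · exact absurd heq (by decide)
    · exact absurd heq (by decide)
    · exact absurd heq (by decide)
    · exact absurd heq (by decide)
    · exact absurd heq (by decide)
    · exact contra2 _ _ m1 m2 hd
    · exact absurd heq (by decide)
    · exact absurd heq (by decide)
    · exact contra2 _ _ m2 m1 hd'
    · exact absurd heq (by decide)
  have hG1X : G₁ ⊆ X₁ := hu₁ ▸ subset_union_right
  have hF1X : F₁ ⊆ X₁ := hu₁ ▸ subset_union_left
  have hG2X : G₂ ⊆ X₂ := hu₂ ▸ subset_union_right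
  have hF2X : F₂ ⊆ X₂ := hu₂ ▸ subset_union_left
  have hone : ((n:ℕ):ℝ)/n = 1 := by field_simp
  have hL : ∀ j, j ≤ n → l 0 j ≠ 2 := by
    intro j hj he
    rcases hlab 0 j (by omega) hj with ⟨e1, m1⟩ | ⟨e1, m1⟩ | ⟨e1, m1⟩ | ⟨e1, m1⟩ <;>
      rw [e1] at he <;> try exact absurd he (by decide)
    have : g 0 j ∈ F₁ := hA₁ ⟨hG1X m1, by rw [Set.mem_setOf_eq, hg0]; norm_num⟩
    exact disjoint_left.mp hd₁ this m1
  have hR : ∀ j, j ≤ n → l n j ≠ 0 := by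
    intro j hj he
    rcases hlab n j le_rfl hj with ⟨e1, m1⟩ | ⟨e1, m1⟩ | ⟨e1, m1⟩ | ⟨e1, m1⟩ <;>
      rw [e1] at he <;> try exact absurd he (by decide)
    have : g n j ∈ G₁ := hB₁ ⟨hF1X m1, by rw [Set.mem_setOf_eq, hg0]; exact hone⟩
    exact disjoint_left.mp hd₁ m1 this
  have hBo : ∀ i, i ≤ n → l i 0 ≠ 3 := by
    intro i hi he
    rcases hlab i 0 hi (by omega) with ⟨e1, m1⟩ | ⟨e1, m1⟩ | ⟨e1, m1⟩ | ⟨e1, m1⟩ <;>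
      rw [e1] at he <;> try exact absurd he (by decide)
    have : g i 0 ∈ F₂ := hA₂ ⟨hG2X m1, by rw [Set.mem_setOf_eq, hg1]; norm_num⟩
    exact disjoint_left.mp hd₂ this m1
  have hTo : ∀ i, i ≤ n → l i n ≠ 1 := by
    intro i hi he
    rcases hlab i n hi le_rfl with ⟨e1, m1⟩ | ⟨e1, m1⟩ | ⟨e1, m1⟩ | ⟨e1, m1⟩ <;>
      rw [e1] at he <;> try exact absurd he (by decide)
    have : g i n ∈ G₂ := hB₂ ⟨hF2X m1, by rw [Set.mem_setOf_eq, hg1]; exact hone⟩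
    exact disjoint_left.mp hd₂ m1 this
  exact hex_discrete n hn1 l hadj hL hR hBo hTo
end
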